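/- arXiv:1210.5125 — 10 statements merged into one kernel-verified Lean document; each statement's English description precedes it below -/
import Mathlib

section
/- Let Γ be a finite simple graph with every vertex of positive degree and let p be a vertex of Γ. Let Γ' be the graph obtained by doubling p, i.e., adding one new vertex q joined by an edge to every neighbor of p in Γ (and to no other vertex; in particular q is not joined to p). Then the function f on V(Γ') with f(p) = 1, f(q) = −1, and f = 0 elsewhere is a nonzero eigenfunction of the normalized Laplacian of Γ' for the eigenvalue 1; in particular 1 is an eigenvalue of Γ'. -/
open Finset

variable {V W : Type*}

/-- `f` is an eigenfunction of the normalized graph Laplacian of `G` for the eigenvalue `μ`: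
`f` is nonzero and `∑_{j ∼ i} f j = (1 - μ) · deg i · f i` for every vertex `i`. -/
def SimpleGraph.IsLapEigenfunction [Fintype V] (G : SimpleGraph V) [DecidableRel G.Adj]
    (μ : ℝ) (f : V → ℝ) : Prop :=
  f ≠ 0 ∧ ∀ i, ∑ j ∈ G.neighborFinset i, f j = (1 - μ) * (G.degree i : ℝ) * f i

/-- `μ` is an eigenvalue of the normalized graph Laplacian of `G`. -/
def SimpleGraph.IsLapEigenvalue [Fintype V] (G : SimpleGraph V) [DecidableRel G.Adj]
    (μ : ℝ) : Prop :=
  ∃ f : V → ℝ, G.IsLapEigenfunction μ f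

/-- The graph obtained from `G` by doubling the vertex `p`: one new vertex is added and
joined to exactly the neighbors of `p` in `G` (in particular not to `p` itself). -/
def SimpleGraph.doubleVertex (G : SimpleGraph V) (p : V) : SimpleGraph (V ⊕ Unit) where
  Adj x y :=
    match x, y with
    | Sum.inl a, Sum.inl b => G.Adj a b
    | Sum.inl a, Sum.inr _ => G.Adj a p
    | Sum.inr _, Sum.inl b => G.Adj p b
    | Sum.inr _, Sum.inr _ => False
  symm := by
    constructor
    rintro (a | a) (b | b) h
    · exact G.adj_symm h
    · exact G.adj_symm h
    · exact G.adj_symm h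
    · exact h
  loopless := by
    constructor
    rintro (a | a) h
    · exact G.irrefl h
    · exact h

instance (G : SimpleGraph V) [DecidableRel G.Adj] (p : V) :
    DecidableRel (G.doubleVertex p).Adj := fun x y =>
  match x, y with
  | Sum.inl a, Sum.inl b => inferInstanceAs (Decidable (G.Adj a b))
  | Sum.inl a, Sum.inr _ => inferInstanceAs (Decidable (G.Adj a p))
  | Sum.inr _, Sum.inl b => inferInstanceAs (Decidable (G.Adj p b))
  | Sum.inr _, Sum.inr _ => inferInstanceAs (Decidable False)

/-- Doubling a vertex `p` of a graph `Γ` (all of whose vertices have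
positive degree) produces the eigenvalue `1` of the normalized Laplacian, with the
eigenfunction taking value `1` at `p`, `-1` at its double, and `0` elsewhere. -/
theorem doubleVertex_isLapEigenfunction_one
    {V : Type*} [Fintype V] [DecidableEq V] (G : SimpleGraph V) [DecidableRel G.Adj]
    (hdeg : ∀ v, 0 < G.degree v) (p : V) :
    (G.doubleVertex p).IsLapEigenfunction 1
        (Sum.elim (fun a => if a = p then (1 : ℝ) else 0) (fun _ => -1))
      ∧ (G.doubleVertex p).IsLapEigenvalue 1 := by
  have hmain : (G.doubleVertex p).IsLapEigenfunction 1
      (Sum.elim (fun a => if a = p then (1 : ℝ) else 0) (fun _ => -1)) := by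
    constructor
    · intro h
      have := congrFun h (Sum.inl p)
      simp at this
    · intro i
      have hrw : ∀ (j : V ⊕ Unit),
          (∑ k ∈ (G.doubleVertex p).neighborFinset j,
            Sum.elim (fun a => if a = p then (1 : ℝ) else 0) (fun _ => -1) k)
          = ∑ k : V ⊕ Unit, if (G.doubleVertex p).Adj j k then
              Sum.elim (fun a => if a = p then (1 : ℝ) else 0) (fun _ => -1) k else 0 := by
        intro j
        rw [← Finset.sum_filter]
        congr 1
        ext k
        simp [SimpleGraph.mem_neighborFinset]
      rw [hrw]
      cases i with
      | inl a =>
        rw [Fintype.sum_sum_type]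
        have h1 : (∑ b : V, if (G.doubleVertex p).Adj (Sum.inl a) (Sum.inl b) then
            Sum.elim (fun a => if a = p then (1 : ℝ) else 0) (fun _ => -1) ((Sum.inl b : V ⊕ Unit)) else 0)
            = if G.Adj a p then 1 else 0 := by
          have : ∀ b : V, (if (G.doubleVertex p).Adj (Sum.inl a) (Sum.inl b) then
              Sum.elim (fun a => if a = p then (1 : ℝ) else 0) (fun _ => -1) ((Sum.inl b : V ⊕ Unit)) else 0)
              = if b = p then (if G.Adj a p then (1:ℝ) else 0) else 0 := by
            intro b
            by_cases hb : b = p <;> simp [hb, SimpleGraph.doubleVertex]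
          rw [Finset.sum_congr rfl (fun b _ => this b)]
          simp
        have h2 : (∑ u : Unit, if (G.doubleVertex p).Adj (Sum.inl a) (Sum.inr u) then
            Sum.elim (fun a => if a = p then (1 : ℝ) else 0) (fun _ => -1) ((Sum.inr u : V ⊕ Unit)) else 0)
            = if G.Adj a p then -1 else 0 := by
          by_cases h : G.Adj a p <;> simp [SimpleGraph.doubleVertex, h]
        rw [h1, h2]
        by_cases h : G.Adj a p <;> simp [h]
      | inr u =>
        rw [Fintype.sum_sum_type]
        have h1 : (∑ b : V, if (G.doubleVertex p).Adj (Sum.inr u) (Sum.inl b) then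
            Sum.elim (fun a => if a = p then (1 : ℝ) else 0) (fun _ => -1) ((Sum.inl b : V ⊕ Unit)) else 0)
            = 0 := by
          apply Finset.sum_eq_zero
          intro b _
          by_cases hb : b = p <;> simp [hb, SimpleGraph.doubleVertex]
        have h2 : (∑ v : Unit, if (G.doubleVertex p).Adj (Sum.inr u) (Sum.inr v) then
            Sum.elim (fun a => if a = p then (1 : ℝ) else 0) (fun _ => -1) ((Sum.inr v : V ⊕ Unit)) else 0)
            = 0 := by
          simp [SimpleGraph.doubleVertex]
        rw [h1, h2]
        simp
  exact ⟨hmain, ⟨_, hmain⟩⟩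
end

section
/- Let Γ be a finite simple graph with every vertex of positive degree, let p be a vertex of Γ, and let Γ^{(m)} be obtained from Γ by doubling p repeatedly m times, i.e., adding new vertices q_1, …, q_m, each joined by an edge exactly to the neighbors of p in Γ (so no two of p, q_1, …, q_m are adjacent). Then for each j = 1, …, m the function f_j with f_j = 1 on {p, q_1, …, q_{j−1}}, f_j(q_j) = −j, and f_j = 0 elsewhere is an eigenfunction of the normalized Laplacian of Γ^{(m)} for the eigenvalue 1; these m functions are linearly independent, hence the multiplicity of the eigenvalue 1 of Γ^{(m)} is at least m. -/
open Finset

variable {V W : Type*}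

/-- The eigenspace of the normalized graph Laplacian of `G` for the eigenvalue `μ`
(written via the eigenfunction equation); its dimension is the multiplicity of `μ`. -/
def SimpleGraph.lapEigenspace [Fintype V] (G : SimpleGraph V) [DecidableRel G.Adj]
    (μ : ℝ) : Submodule ℝ (V → ℝ) where
  carrier := {f | ∀ i, ∑ j ∈ G.neighborFinset i, f j = (1 - μ) * (G.degree i : ℝ) * f i}
  zero_mem' := by intro i; simp
  add_mem' := by
    intro f g hf hg i
    simp only [Pi.add_apply, Finset.sum_add_distrib, hf i, hg i]
    ring
  smul_mem' := by
    intro c f hf i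
    simp only [Pi.smul_apply, smul_eq_mul, ← Finset.mul_sum, hf i]
    ring

/-- The graph obtained from `G` by doubling the vertex `p` repeatedly `m` times:
`m` new vertices are added, each joined to exactly the neighbors of `p` in `G`
(so no two of `p` and the new vertices are adjacent). -/
def SimpleGraph.doubleVertexMany (G : SimpleGraph V) (p : V) (m : ℕ) :
    SimpleGraph (V ⊕ Fin m) where
  Adj x y :=
    match x, y with
    | Sum.inl a, Sum.inl b => G.Adj a b
    | Sum.inl a, Sum.inr _ => G.Adj a p
    | Sum.inr _, Sum.inl b => G.Adj p b
    | Sum.inr _, Sum.inr _ => False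
  symm := by
    constructor
    rintro (a | a) (b | b) h
    · exact G.adj_symm h
    · exact G.adj_symm h
    · exact G.adj_symm h
    · exact h
  loopless := by
    constructor
    rintro (a | a) h
    · exact G.loopless.irrefl a h
    · exact h

instance (G : SimpleGraph V) [DecidableRel G.Adj] (p : V) (m : ℕ) :
    DecidableRel (G.doubleVertexMany p m).Adj := fun x y =>
  match x, y with
  | Sum.inl a, Sum.inl b => inferInstanceAs (Decidable (G.Adj a b))
  | Sum.inl a, Sum.inr _ => inferInstanceAs (Decidable (G.Adj a p))
  | Sum.inr _, Sum.inl b => inferInstanceAs (Decidable (G.Adj p b))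
  | Sum.inr _, Sum.inr _ => inferInstanceAs (Decidable False)

/-- Doubling a vertex `p` of `Γ` repeatedly `m` times produces the
eigenvalue `1` with multiplicity at least `m`: the functions `f j` (value `1` on `p` and
the first `j` doubles, `-(j+1)` on the `(j+1)`-st double, `0` elsewhere) are linearly
independent eigenfunctions for the eigenvalue `1`. -/
theorem doubleVertexMany_eigenvalue_one_multiplicity
    {V : Type*} [Fintype V] [DecidableEq V] (G : SimpleGraph V) [DecidableRel G.Adj]
    (hdeg : ∀ v, 0 < G.degree v) (p : V) (m : ℕ)
    (f : Fin m → (V ⊕ Fin m) → ℝ)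
    (hf : ∀ j, f j = Sum.elim (fun a => if a = p then (1 : ℝ) else 0)
        (fun i => if i < j then 1 else if i = j then -((j : ℕ) + 1 : ℝ) else 0)) :
    (∀ j, (G.doubleVertexMany p m).IsLapEigenfunction 1 (f j))
      ∧ LinearIndependent ℝ f
      ∧ m ≤ Module.finrank ℝ ((G.doubleVertexMany p m).lapEigenspace 1) := by
  classical
  set G' := G.doubleVertexMany p m with hG'
  -- key: the eigenfunction equation for μ = 1
  have hmem : ∀ j : Fin m, f j ∈ G'.lapEigenspace 1 := by
    intro j i
    have hsum : ∑ x ∈ G'.neighborFinset i, f j x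
        = ∑ x, if G'.Adj i x then f j x else 0 := by
      rw [SimpleGraph.neighborFinset_eq_filter, Finset.sum_filter]
    rw [hsum, hf j]
    simp only [sub_self, zero_mul]
    rw [Fintype.sum_sum_type]
    cases i with
    | inl a =>
      have h1 : ∑ b : V, (if G'.Adj (Sum.inl a) (Sum.inl b) then
          Sum.elim (fun a => if a = p then (1:ℝ) else 0)
            (fun i => if i < j then 1 else if i = j then -((j:ℕ)+1:ℝ) else 0) (Sum.inl b) else 0)
          = if G.Adj a p then (1:ℝ) else 0 := by
        have hadj0 : ∀ b : V, G'.Adj (Sum.inl a) (Sum.inl b) = G.Adj a b := fun b => rfl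
        have : ∀ b : V, (if G'.Adj (Sum.inl a) (Sum.inl b) then (if b = p then (1:ℝ) else 0) else 0)
            = if b = p then (if G.Adj a p then (1:ℝ) else 0) else 0 := by
          intro b
          by_cases hb : b = p
          · subst hb; simp [hadj0]
          · simp [hb]
        simp only [Sum.elim_inl]
        rw [Finset.sum_congr rfl fun b _ => this b, Finset.sum_ite_eq' Finset.univ p]
        simp
      have h2 : ∑ k : Fin m, (if G'.Adj (Sum.inl a) (Sum.inr k) then
          Sum.elim (fun a => if a = p then (1:ℝ) else 0)
            (fun i => if i < j then 1 else if i = j then -((j:ℕ)+1:ℝ) else 0) (Sum.inr k) else 0)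
          = if G.Adj a p then (-1:ℝ) else 0 := by
        have hadj : ∀ k : Fin m, G'.Adj (Sum.inl a) (Sum.inr k) = G.Adj a p := fun k => rfl
        simp only [Sum.elim_inr, hadj]
        by_cases h : G.Adj a p
        · simp only [h, if_true]
          have hpt : ∀ k : Fin m, (if k < j then (1:ℝ) else if k = j then -((j:ℕ)+1:ℝ) else 0)
              = (if k < j then (1:ℝ) else 0) + (if k = j then -((j:ℕ)+1:ℝ) else 0) := by
            intro k
            rcases lt_trichotomy k j with h' | h' | h'
            · simp [h', h'.ne]
            · simp [h']
            · simp [h'.ne', not_lt.mpr h'.le, (by omega : ¬ k < j)]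
          rw [Finset.sum_congr rfl fun k _ => hpt k, Finset.sum_add_distrib]
          rw [Finset.sum_ite_eq' Finset.univ j]
          have hcard : ∑ k : Fin m, (if k < j then (1:ℝ) else 0)
              = ((Finset.univ.filter (fun k : Fin m => k < j)).card : ℝ) := by
            rw [← Finset.sum_filter]
            simp
          rw [hcard]
          have : (Finset.univ.filter (fun k : Fin m => k < j)).card = (j : ℕ) := by
            have : Finset.univ.filter (fun k : Fin m => k < j) = Finset.Iio j := by
              ext k; simp
            rw [this, Fin.card_Iio]
          rw [this]
          simp
        · simp [h]
      rw [h1, h2]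
      by_cases h : G.Adj a p <;> simp [h]
    | inr k =>
      have h1 : ∀ b : V, G'.Adj (Sum.inr k) (Sum.inl b) = G.Adj p b := fun b => rfl
      have h2 : ∀ k' : Fin m, G'.Adj (Sum.inr k) (Sum.inr k') = False := fun k' => rfl
      simp only [h1, h2, if_false, Finset.sum_const_zero, add_zero, Sum.elim_inl]
      have : ∀ b : V, (if G.Adj p b then (if b = p then (1:ℝ) else 0) else 0) = 0 := by
        intro b
        by_cases hb : b = p
        · subst hb; simp
        · simp [hb]
      simp [this]
  have hnz : ∀ j : Fin m, f j ≠ 0 := by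
    intro j h0
    have := congrFun h0 (Sum.inr j)
    rw [hf j] at this
    simp at this
    have hj0 : (0:ℝ) ≤ ((j:ℕ):ℝ) := Nat.cast_nonneg _
    linarith
  have heig : ∀ j, G'.IsLapEigenfunction 1 (f j) := fun j => ⟨hnz j, hmem j⟩
  -- linear independence via a triangular matrix
  have hli : LinearIndependent ℝ f := by
    have hM : LinearIndependent ℝ (fun j : Fin m => fun k : Fin m => f j (Sum.inr k)) := by
      rw [Fintype.linearIndependent_iff]
      intro c hc
      -- downward strong induction
      have key : ∀ n : ℕ, ∀ j : Fin m, (m - 1 - (j : ℕ)) < n → c j = 0 := by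
        intro n
        induction n with
        | zero => intro j hj; omega
        | succ n ih =>
          intro j hj
          have := congrFun hc j
          simp only [hf, Fintype.sum_apply, Pi.smul_apply, Sum.elim_inr, Pi.zero_apply,
            smul_eq_mul] at this
          have hterm : ∀ i : Fin m, c i * (if (j:Fin m) < i then (1:ℝ)
              else if (j:Fin m) = i then -((i:ℕ)+1:ℝ) else 0)
              = (if j < i then c i else 0) + (if j = i then -((j:ℕ)+1:ℝ) * c j else 0) := by
            intro i
            rcases lt_trichotomy j i with h' | h' | h'
            · simp [h', h'.ne, smul_eq_mul]
            · subst h'; simp [smul_eq_mul]; ring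
            · simp [h'.ne', not_lt.mpr h'.le, (by omega : ¬ j < i), smul_eq_mul]
          rw [Finset.sum_congr rfl fun i _ => hterm i, Finset.sum_add_distrib,
            Finset.sum_ite_eq Finset.univ j] at this
          simp only [Finset.mem_univ, if_true, Pi.zero_apply] at this
          have hzero : ∑ i : Fin m, (if j < i then c i else 0) = 0 := by
            apply Finset.sum_eq_zero
            intro i _
            by_cases h' : j < i
            · simp only [h', if_true]
              exact ih i (by omega)
            · simp [h']
          rw [hzero, zero_add] at this
          have : -((j:ℕ)+1:ℝ) * c j = 0 := this
          have hne : -((j:ℕ)+1:ℝ) ≠ 0 := by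
            have : (0:ℝ) < (j:ℕ)+1 := by positivity
            linarith
          exact (mul_eq_zero.mp this).resolve_left hne
      intro j
      exact key m j (by omega)
    have hcomp : (fun j : Fin m => fun k : Fin m => f j (Sum.inr k))
        = (LinearMap.funLeft ℝ ℝ Sum.inr) ∘ f := rfl
    exact LinearIndependent.of_comp _ (hcomp ▸ hM)
  refine ⟨heig, hli, ?_⟩
  -- finrank bound
  have hli' : LinearIndependent ℝ (fun j : Fin m =>
      (⟨f j, hmem j⟩ : G'.lapEigenspace 1)) := by
    apply LinearIndependent.of_comp (G'.lapEigenspace 1).subtype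
    convert hli
    funext j; rfl
  simpa using hli'.fintype_card_le_finrank
end

section
/- Let Γ be a finite simple graph with every vertex of positive degree, and suppose Γ contains k distinct vertices p_1, …, p_k whose neighbor sets are all equal: N(p_1) = N(p_2) = ⋯ = N(p_k). Then 1 is an eigenvalue of the normalized Laplacian of Γ with multiplicity at least k − 1. -/
open Finset

variable {V W : Type*}

/-- If a graph `Γ` (all of whose vertices have positive degree) contains
`k ≥ 2` distinct vertices with pairwise equal neighbor sets, then `1` is an eigenvalue of
its normalized Laplacian with multiplicity at least `k - 1`. -/
theorem eigenvalue_one_of_equal_neighborSets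
    {V : Type*} [Fintype V] [DecidableEq V] (G : SimpleGraph V) [DecidableRel G.Adj]
    (hdeg : ∀ v, 0 < G.degree v) (k : ℕ) (hk : 2 ≤ k)
    (p : Fin k → V) (hp : Function.Injective p)
    (hN : ∀ i j : Fin k, G.neighborSet (p i) = G.neighborSet (p j)) :
    G.IsLapEigenvalue 1 ∧ k - 1 ≤ Module.finrank ℝ (G.lapEigenspace 1) := by

  -- the vertex `p 0` and the embedding `Fin (k-1) → Fin k` hitting nonzero indices
  have hk1 : k - 1 + 1 = k := by omega
  set z : Fin k := ⟨0, by omega⟩ with hz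
  have hmem : ∀ a b : Fin k,
      (Pi.single (p a) 1 - Pi.single (p b) 1 : V → ℝ) ∈ G.lapEigenspace 1 := by
    intro a b i
    have hadj : ∀ c d : Fin k, (G.Adj i (p c) ↔ G.Adj i (p d)) := by
      intro c d
      constructor <;> intro h
      · have : i ∈ G.neighborSet (p c) := G.adj_symm h
        rw [hN c d] at this
        exact G.adj_symm this
      · have : i ∈ G.neighborSet (p d) := G.adj_symm h
        rw [hN d c] at this
        exact G.adj_symm this
    have hsum : ∀ c : Fin k,
        ∑ j ∈ G.neighborFinset i, (Pi.single (p c) 1 : V → ℝ) j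
          = if G.Adj i (p c) then (1:ℝ) else 0 := by
      intro c
      simp only [Pi.single_apply]
      rw [Finset.sum_ite_eq' (G.neighborFinset i) (p c) (fun _ => (1:ℝ))]
      simp [SimpleGraph.mem_neighborFinset]
    simp only [Pi.sub_apply, Finset.sum_sub_distrib, hsum a, hsum b]
    rw [if_congr (hadj a b) rfl rfl]
    ring
  constructor
  · refine ⟨Pi.single (p z) 1 - Pi.single (p ⟨1, by omega⟩) 1, ?_, hmem z _⟩
    intro h0
    have := congrFun h0 (p z)
    simp only [Pi.sub_apply, Pi.single_apply, Pi.zero_apply] at this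
    have hne : p z ≠ p ⟨1, by omega⟩ := fun h => by
      have := hp h; simp [hz, Fin.ext_iff] at this
    simp [hne] at this
  · set e : Fin (k-1) → Fin k := fun t => ⟨t.1 + 1, by omega⟩ with he
    set g : Fin (k-1) → (V → ℝ) :=
      fun t => Pi.single (p (e t)) 1 - Pi.single (p z) 1 with hg
    have hgmem : ∀ t, g t ∈ G.lapEigenspace 1 := fun t => hmem _ _
    have hez : ∀ t : Fin (k-1), e t ≠ z := by
      intro t h; simp [he, hz, Fin.ext_iff] at h
    have hei : Function.Injective e := by
      intro a b h; simpa [he, Fin.ext_iff] using h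
    have hli : LinearIndependent ℝ g := by
      rw [Fintype.linearIndependent_iff]
      intro c hc s
      have := congrFun hc (p (e s))
      simp only [hg, Finset.sum_apply, Pi.smul_apply, Pi.sub_apply, Pi.single_apply,
        smul_eq_mul, Pi.zero_apply, hp.eq_iff, hei.eq_iff] at this
      rw [if_neg (hez s)] at this
      simpa [mul_ite] using this
    have h1 : Submodule.span ℝ (Set.range g) ≤ G.lapEigenspace 1 :=
      Submodule.span_le.mpr (by rintro _ ⟨t, rfl⟩; exact hgmem t)
    have h2 := finrank_span_eq_card hli
    calc k - 1 = Fintype.card (Fin (k-1)) := by simp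
      _ = Module.finrank ℝ (Submodule.span ℝ (Set.range g)) := h2.symm
      _ ≤ Module.finrank ℝ (G.lapEigenspace 1) := Submodule.finrank_mono h1
end

section
/- Let Γ be a finite simple graph with every vertex of positive degree, let Σ be a motif (an induced subgraph) of Γ on vertices p_1, …, p_m, and suppose a nonzero function f^Σ : {p_1,…,p_m} → ℝ satisfies ∑_{p_β ∈ Σ, p_β ∼ p_α} f^Σ(p_β) = 0 for every α (the eigenvalue-1 equation on Σ). Let Γ^Σ be obtained from Γ by doubling Σ: add new vertices q_1, …, q_m with q_α ∼ q_β whenever p_α ∼ p_β, and join q_α to every vertex p ∉ Σ that is a neighbor of p_α in Γ (the q_α are not joined to any vertex of Σ). Then the function taking value f^Σ(p_α) at p_α, −f^Σ(p_α) at q_α, and 0 on all other vertices is an eigenfunction of the normalized Laplacian of Γ^Σ for the eigenvalue 1. -/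
open Finset

variable {V W : Type*}

/-- The graph obtained from `G` by doubling the motif induced on the vertex set `s`:
a copy of the induced subgraph on `s` is added, and the copy `q_α` of each vertex
`p_α ∈ s` is joined to every neighbor of `p_α` in `G` lying outside `s`
(the copies are not joined to any vertex of `s`). -/
def SimpleGraph.doubleMotif [DecidableEq V] (G : SimpleGraph V) (s : Finset V) :
    SimpleGraph (V ⊕ {x // x ∈ s}) where
  Adj x y :=
    match x, y with
    | Sum.inl a, Sum.inl b => G.Adj a b
    | Sum.inl a, Sum.inr b => a ∉ s ∧ G.Adj a b.1
    | Sum.inr a, Sum.inl b => b ∉ s ∧ G.Adj a.1 b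
    | Sum.inr a, Sum.inr b => G.Adj a.1 b.1
  symm := ⟨by
    rintro (a | a) (b | b) h
    · exact G.adj_symm h
    · exact ⟨h.1, G.adj_symm h.2⟩
    · exact ⟨h.1, G.adj_symm h.2⟩
    · exact G.adj_symm h⟩
  loopless := ⟨by
    rintro (a | a) h
    · exact G.ne_of_adj h rfl
    · exact G.ne_of_adj h rfl⟩

instance [DecidableEq V] (G : SimpleGraph V) [DecidableRel G.Adj] (s : Finset V) :
    DecidableRel (G.doubleMotif s).Adj := fun x y =>
  match x, y with
  | Sum.inl a, Sum.inl b => inferInstanceAs (Decidable (G.Adj a b))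
  | Sum.inl a, Sum.inr b => inferInstanceAs (Decidable (a ∉ s ∧ G.Adj a b.1))
  | Sum.inr a, Sum.inl b => inferInstanceAs (Decidable (b ∉ s ∧ G.Adj a.1 b))
  | Sum.inr a, Sum.inr b => inferInstanceAs (Decidable (G.Adj a.1 b.1))

/-- If a nonzero function `f` on the vertex set `s` of a motif of `Γ`
satisfies the eigenvalue-1 equation `∑_{b ∈ s, b ∼ a} f b = 0` for every `a ∈ s`, then the
function equal to `f` on `s`, `-f` on the duplicate of `s`, and `0` elsewhere is an
eigenfunction of the normalized Laplacian of the motif-doubled graph for the eigenvalue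
`1`. -/
theorem doubleMotif_isLapEigenfunction_one
    {V : Type*} [Fintype V] [DecidableEq V] (G : SimpleGraph V) [DecidableRel G.Adj]
    (hdeg : ∀ v, 0 < G.degree v) (s : Finset V) (f : V → ℝ)
    (hne : ∃ a ∈ s, f a ≠ 0)
    (heq : ∀ a ∈ s, ∑ b ∈ s.filter (fun b => G.Adj a b), f b = 0) :
    (G.doubleMotif s).IsLapEigenfunction 1
      (Sum.elim (fun a => if a ∈ s then f a else 0) (fun b => -f b.1)) := by
  obtain ⟨a₀, ha₀, hf₀⟩ := hne
  constructor
  · intro h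
    have := congrFun h (Sum.inr ⟨a₀, ha₀⟩)
    simp at this
    exact hf₀ this
  · intro i
    rw [sub_self, zero_mul, zero_mul]
    have hnb : (G.doubleMotif s).neighborFinset i = univ.filter ((G.doubleMotif s).Adj i) := by
      ext j; simp [SimpleGraph.mem_neighborFinset]
    rw [hnb, Finset.sum_filter]
    cases i with
    | inl a =>
      rw [Fintype.sum_sum_type]
      have h1 : ∀ b : V, (if (G.doubleMotif s).Adj (.inl a) (.inl b) then
          Sum.elim (fun a => if a ∈ s then f a else 0) (fun b : {x // x ∈ s} => -f b.1) (.inl b) else 0)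
          = if b ∈ s.filter (fun b => G.Adj a b) then f b else 0 := by
        intro b
        simp only [SimpleGraph.doubleMotif, Sum.elim_inl, Finset.mem_filter]
        by_cases hb : G.Adj a b <;> by_cases hbs : b ∈ s <;> simp [hb, hbs]
      have h2 : ∀ b : {x // x ∈ s}, (if (G.doubleMotif s).Adj (.inl a) (.inr b) then
          Sum.elim (fun a => if a ∈ s then f a else 0) (fun b : {x // x ∈ s} => -f b.1) (.inr b) else 0)
          = if a ∉ s ∧ G.Adj a b.1 then -f b.1 else 0 := by
        intro b; rfl
      simp only [h1, h2, Finset.sum_ite_mem, Finset.univ_inter]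
      by_cases has : a ∈ s
      · simp [has, heq a has]
      · have h3 : ∑ b : {x // x ∈ s}, (if a ∉ s ∧ G.Adj a b.1 then -f b.1 else 0)
            = ∑ b : {x // x ∈ s}, (if G.Adj a b.1 then -f b.1 else 0) := by
          apply Finset.sum_congr rfl; intro b _; simp [has]
        rw [h3, Finset.sum_coe_sort s (fun b => if G.Adj a b then -f b else 0),
          ← Finset.sum_filter]
        simp [Finset.sum_neg_distrib]
    | inr a =>
      rw [Fintype.sum_sum_type]
      have h1 : ∀ b : V, (if (G.doubleMotif s).Adj (.inr a) (.inl b) then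
          Sum.elim (fun a => if a ∈ s then f a else 0) (fun b : {x // x ∈ s} => -f b.1) (.inl b) else 0)
          = 0 := by
        intro b
        simp only [SimpleGraph.doubleMotif, Sum.elim_inl]
        by_cases hb : b ∉ s ∧ G.Adj a.1 b
        · simp [hb, hb.1]
        · simp [hb]
      have h2 : ∀ b : {x // x ∈ s}, (if (G.doubleMotif s).Adj (.inr a) (.inr b) then
          Sum.elim (fun a => if a ∈ s then f a else 0) (fun b : {x // x ∈ s} => -f b.1) (.inr b) else 0)
          = if G.Adj a.1 b.1 then -f b.1 else 0 := by
        intro b; rfl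
      simp only [h1, h2, Finset.sum_const_zero, zero_add]
      rw [Finset.sum_coe_sort s (fun b => if G.Adj a.1 b then -f b else 0), ← Finset.sum_filter]
      simp [Finset.sum_neg_distrib, heq a.1 a.2]
end

section
/- (Theorem 1) Let Γ be a finite simple graph with every vertex of positive degree, let Σ be a motif of Γ on vertices p_1, …, p_k, and suppose a nonzero function f^Σ satisfies ∑_{p_β ∈ Σ, p_β ∼ p_α} f^Σ(p_β) = 0 for every α. Let Γ^{Σ^m} be obtained from Γ by duplicating Σ m times: for each l = 1,…,m add new vertices q^{(l)}_1, …, q^{(l)}_k with q^{(l)}_α ∼ q^{(l)}_β whenever p_α ∼ p_β, and with q^{(l)}_α joined to every vertex p ∉ Σ of Γ that is a neighbor of p_α in Γ; distinct copies are not joined to each other nor to Σ. Then 1 is an eigenvalue of the normalized Laplacian of Γ^{Σ^m} with multiplicity at least m; explicitly, for j = 1,…,m the function equal to f^Σ(p_α) at p_α and at q^{(l)}_α for 1 ≤ l ≤ j−1, equal to −j·f^Σ(p_α) at q^{(j)}_α, and 0 elsewhere, is an eigenfunction for eigenvalue 1, and these m functions are linearly independent. -/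
open Finset

variable {V W : Type*}

/-- The graph obtained from `G` by duplicating the motif induced on the vertex set `s`
`m` times: for each `l : Fin m` a copy of the induced subgraph on `s` is added, the copy
`q^(l)_α` of each vertex `p_α ∈ s` is joined to every neighbor of `p_α` in `G` lying
outside `s`, and distinct copies are not joined to each other nor to `s`. -/
def SimpleGraph.doubleMotifMany [DecidableEq V] (G : SimpleGraph V) (s : Finset V) (m : ℕ) :
    SimpleGraph (V ⊕ Fin m × {x // x ∈ s}) where
  Adj x y :=
    match x, y with
    | Sum.inl a, Sum.inl b => G.Adj a b
    | Sum.inl a, Sum.inr b => a ∉ s ∧ G.Adj a b.2.1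
    | Sum.inr a, Sum.inl b => b ∉ s ∧ G.Adj a.2.1 b
    | Sum.inr a, Sum.inr b => a.1 = b.1 ∧ G.Adj a.2.1 b.2.1
  symm := by
    refine ⟨?_⟩
    rintro (a | a) (b | b) h
    · exact G.adj_symm h
    · exact ⟨h.1, G.adj_symm h.2⟩
    · exact ⟨h.1, G.adj_symm h.2⟩
    · exact ⟨h.1.symm, G.adj_symm h.2⟩
  loopless := by
    refine ⟨?_⟩
    rintro (a | a) h
    · exact G.irrefl h
    · exact G.irrefl h.2

instance [DecidableEq V] (G : SimpleGraph V) [DecidableRel G.Adj] (s : Finset V) (m : ℕ) :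
    DecidableRel (G.doubleMotifMany s m).Adj := fun x y =>
  match x, y with
  | Sum.inl a, Sum.inl b => inferInstanceAs (Decidable (G.Adj a b))
  | Sum.inl a, Sum.inr b => inferInstanceAs (Decidable (a ∉ s ∧ G.Adj a b.2.1))
  | Sum.inr a, Sum.inl b => inferInstanceAs (Decidable (b ∉ s ∧ G.Adj a.2.1 b))
  | Sum.inr a, Sum.inr b => inferInstanceAs (Decidable (a.1 = b.1 ∧ G.Adj a.2.1 b.2.1))

/-- **Theorem 1.** If a nonzero function `f` on the vertex set `s` of a motif
of `Γ` satisfies the eigenvalue-1 equation `∑_{b ∈ s, b ∼ a} f b = 0` for all `a ∈ s`, then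
after duplicating the motif `m` times, `1` is an eigenvalue of the normalized Laplacian with
multiplicity at least `m`; the functions `F j` (equal to `f` on `s` and on the first `j`
copies, `-(j+1)·f` on the `(j+1)`-st copy, `0` elsewhere) are linearly independent
eigenfunctions for the eigenvalue `1`. -/
theorem doubleMotifMany_eigenvalue_one_multiplicity
    {V : Type*} [Fintype V] [DecidableEq V] (G : SimpleGraph V) [DecidableRel G.Adj]
    (hdeg : ∀ v, 0 < G.degree v) (s : Finset V) (m : ℕ) (f : V → ℝ)
    (hne : ∃ a ∈ s, f a ≠ 0)
    (heq : ∀ a ∈ s, ∑ b ∈ s.filter (fun b => G.Adj a b), f b = 0)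
    (F : Fin m → (V ⊕ Fin m × {x // x ∈ s}) → ℝ)
    (hF : ∀ j, F j = Sum.elim (fun a => if a ∈ s then f a else 0)
        (fun q => if q.1 < j then f q.2.1
          else if q.1 = j then -((j : ℕ) + 1 : ℝ) * f q.2.1 else 0)) :
    (∀ j, (G.doubleMotifMany s m).IsLapEigenfunction 1 (F j))
      ∧ LinearIndependent ℝ F
      ∧ m ≤ Module.finrank ℝ ((G.doubleMotifMany s m).lapEigenspace 1) := by
    classical
  set G' := G.doubleMotifMany s m with hG'
  -- weight of the `l`-th copy in `F j`
  have hw : ∀ (j : Fin m) (p : Fin m × {x // x ∈ s}),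
      F j (Sum.inr p) = (if p.1 < j then (1:ℝ) else if p.1 = j then -((j:ℕ)+1:ℝ) else 0)
        * f p.2.1 := by
    intro j p
    rw [hF j]
    by_cases h1 : p.1 < j <;> by_cases h2 : p.1 = j <;> simp [h1, h2]
  -- the key computation: the sum of `F j` over the neighbors of any vertex is `0`
  have hsum : ∀ (j : Fin m) (i : V ⊕ Fin m × {x // x ∈ s}),
      ∑ x ∈ G'.neighborFinset i, F j x = 0 := by
    intro j i
    rw [SimpleGraph.neighborFinset_eq_filter, Finset.sum_filter]
    cases i with
    | inl a =>
      rw [Fintype.sum_sum_type]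
      have h1 : ∑ b : V, (if G'.Adj (Sum.inl a) (Sum.inl b) then F j (Sum.inl b) else 0)
          = ∑ b ∈ s.filter (fun b => G.Adj a b), f b := by
        rw [show s.filter (fun b => G.Adj a b)
            = Finset.univ.filter (fun b => G.Adj a b ∧ b ∈ s) from by ext b; simp [and_comm],
          Finset.sum_filter]
        refine Finset.sum_congr rfl fun b _ => ?_
        by_cases hs : b ∈ s <;> by_cases hadj : G.Adj a b <;>
          simp [hF j, hG', SimpleGraph.doubleMotifMany, hs, hadj]
      rw [h1]
      by_cases has : a ∈ s
      · have h2 : ∀ p : Fin m × {x // x ∈ s},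
            (if G'.Adj (Sum.inl a) (Sum.inr p) then F j (Sum.inr p) else 0) = 0 := by
          intro p
          simp [hG', SimpleGraph.doubleMotifMany, has]
        simp only [h2, Finset.sum_const_zero, add_zero]
        exact heq a has
      · -- a is outside the motif
        have h2 : ∑ p : Fin m × {x // x ∈ s},
            (if G'.Adj (Sum.inl a) (Sum.inr p) then F j (Sum.inr p) else 0)
            = ∑ l : Fin m, ((if l < j then (1:ℝ) else if l = j then -((j:ℕ)+1:ℝ) else 0)
                * ∑ b ∈ s.filter (fun b => G.Adj a b), f b) := by
          rw [Fintype.sum_prod_type]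
          refine Finset.sum_congr rfl fun l _ => ?_
          have hterm : ∀ b : {x // x ∈ s},
              (if G'.Adj (Sum.inl a) (Sum.inr (l, b)) then F j (Sum.inr (l, b)) else 0)
              = (if G.Adj a b.1
                  then (if l < j then (1:ℝ) else if l = j then -((j:ℕ)+1:ℝ) else 0) * f b.1
                  else 0) := by
            intro b
            by_cases hadj : G.Adj a b.1 <;>
              simp [hw, hG', SimpleGraph.doubleMotifMany, has, hadj]
          rw [Finset.sum_congr rfl fun b _ => hterm b,
            Finset.sum_coe_sort s (fun b => if G.Adj a b
              then (if l < j then (1:ℝ) else if l = j then -((j:ℕ)+1:ℝ) else 0) * f b else 0),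
            ← Finset.sum_filter, Finset.mul_sum]
        rw [h2, ← Finset.sum_mul]
        have h3 : ∑ l : Fin m, (if l < j then (1:ℝ) else if l = j then -((j:ℕ)+1:ℝ) else 0)
            = -1 := by
          have : ∀ l : Fin m, (if l < j then (1:ℝ) else if l = j then -((j:ℕ)+1:ℝ) else 0)
              = (if l < j then (1:ℝ) else 0) + (if l = j then -((j:ℕ)+1:ℝ) else 0) := by
            intro l
            rcases lt_trichotomy l j with h | h | h
            · simp [h, h.ne]
            · simp [h]
            · simp [h.ne', not_lt.mpr h.le]
          rw [Finset.sum_congr rfl fun l _ => this l, Finset.sum_add_distrib]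
          rw [Finset.sum_ite_eq' Finset.univ j (fun _ => -((j:ℕ)+1:ℝ))]
          simp only [Finset.sum_boole, Finset.mem_univ, if_true]
          have : (Finset.univ.filter (fun l : Fin m => l < j)).card = (j : ℕ) := by
            rw [show Finset.univ.filter (fun l : Fin m => l < j) = Finset.Iio j from by
              ext l; simp]
            exact Fin.card_Iio j
          rw [this]
          ring
        rw [h3]
        ring
    | inr p =>
      rw [Fintype.sum_sum_type]
      have h1 : ∀ b : V,
          (if G'.Adj (Sum.inr p) (Sum.inl b) then F j (Sum.inl b) else 0) = 0 := by
        intro b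
        by_cases hs : b ∈ s
        · simp [hG', SimpleGraph.doubleMotifMany, hs]
        · by_cases hadj : G.Adj p.2.1 b <;>
            simp [hF j, hG', SimpleGraph.doubleMotifMany, hs, hadj]
      have h2 : ∑ q : Fin m × {x // x ∈ s},
          (if G'.Adj (Sum.inr p) (Sum.inr q) then F j (Sum.inr q) else 0) = 0 := by
        rw [Fintype.sum_prod_type]
        refine Finset.sum_eq_zero fun l _ => ?_
        by_cases hl : p.1 = l
        · have : ∀ b : {x // x ∈ s},
              (if G'.Adj (Sum.inr p) (Sum.inr (l, b)) then F j (Sum.inr (l, b)) else 0)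
              = (if l < j then (1:ℝ) else if l = j then -((j:ℕ)+1:ℝ) else 0)
                * (if G.Adj p.2.1 b.1 then f b.1 else 0) := by
            intro b
            by_cases hadj : G.Adj p.2.1 b.1 <;>
              simp [hw, hG', SimpleGraph.doubleMotifMany, hl, hadj]
          rw [Finset.sum_congr rfl fun b _ => this b, ← Finset.mul_sum]
          have : ∑ b : {x // x ∈ s}, (if G.Adj p.2.1 b.1 then f b.1 else 0) = 0 := by
            rw [Finset.sum_coe_sort s (fun b => if G.Adj p.2.1 b then f b else 0),
              ← Finset.sum_filter]
            exact heq p.2.1 p.2.2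
          rw [this, mul_zero]
        · refine Finset.sum_eq_zero fun b _ => ?_
          simp [hG', SimpleGraph.doubleMotifMany, hl]
      rw [h2]
      simp only [h1, Finset.sum_const_zero, zero_add]
  obtain ⟨a, has, hfa⟩ := hne
  -- each `F j` is an eigenfunction
  have heig : ∀ j, G'.IsLapEigenfunction 1 (F j) := by
    intro j
    constructor
    · intro h0
      apply hfa
      have := congrFun h0 (Sum.inl a)
      simpa [hF j, has] using this
    · intro i
      rw [hsum j i]
      ring
  -- linear independence
  have hli : LinearIndependent ℝ F := by
    rw [Fintype.linearIndependent_iff]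
    intro c hc
    have key : ∀ l : Fin m, ((l:ℕ)+1:ℝ) * c l = ∑ jj ∈ Finset.univ.filter (fun jj => l < jj), c jj := by
      intro l
      have h0 := congrFun hc (Sum.inr (l, ⟨a, has⟩))
      simp only [Finset.sum_apply, Pi.smul_apply, smul_eq_mul, Pi.zero_apply] at h0
      have h1 : ∀ jj : Fin m, c jj * F jj (Sum.inr (l, ⟨a, has⟩))
          = ((if l < jj then c jj else 0) + (if l = jj then -((jj:ℕ)+1:ℝ) * c jj else 0)) * f a := by
        intro jj
        rw [hw jj]
        rcases lt_trichotomy l jj with h | h | h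
        · simp [h, h.ne]; try ring
        · simp [h]; try ring
        · simp [h.ne', not_lt.mpr h.le]
      rw [Finset.sum_congr rfl fun jj _ => h1 jj, ← Finset.sum_mul] at h0
      have h2 := (mul_eq_zero.mp h0).resolve_right hfa
      rw [Finset.sum_add_distrib, Finset.sum_ite_eq Finset.univ l
        (fun jj => -((jj:ℕ)+1:ℝ) * c jj)] at h2
      simp only [Finset.mem_univ, if_true, ← Finset.sum_filter] at h2
      linarith
    have main : ∀ k, ∀ l : Fin m, m - l.1 ≤ k → c l = 0 := by
      intro k
      induction k with
      | zero => intro l hl; have := l.2; omega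
      | succ k ih =>
        intro l hl
        have h4 : ∑ jj ∈ Finset.univ.filter (fun jj => l < jj), c jj = 0 := by
          refine Finset.sum_eq_zero fun jj hjj => ?_
          rw [Finset.mem_filter] at hjj
          refine ih jj ?_
          have := jj.2
          have := hjj.2
          rw [Fin.lt_def] at this
          omega
        have h5 := key l
        rw [h4] at h5
        have h6 : ((l:ℕ)+1:ℝ) ≠ 0 := by positivity
        exact (mul_eq_zero.mp h5).resolve_left h6
    intro l
    exact main m l (by omega)
  refine ⟨heig, hli, ?_⟩
  -- multiplicity bound
  have hmem : ∀ j, F j ∈ G'.lapEigenspace 1 := by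
    intro j i
    rw [hsum j i]
    ring
  let F' : Fin m → (G'.lapEigenspace 1) := fun j => ⟨F j, hmem j⟩
  have hli' : LinearIndependent ℝ F' := by
    apply LinearIndependent.of_comp (G'.lapEigenspace 1).subtype
    have : ((G'.lapEigenspace 1).subtype ∘ F') = F := rfl
    rw [this]
    exact hli
  simpa using hli'.fintype_card_le_finrank
end

section
/- (Theorem 2) Let Γ and Γ₁ be disjoint finite simple graphs with every vertex of positive degree, and suppose Γ₁ has an eigenfunction f₁ of its normalized Laplacian for the eigenvalue 1 (i.e., f₁ ≠ 0 and ∑_{j∼i, j∈Γ₁} f₁(j) = 0 for all i ∈ Γ₁). Fix a vertex q ∈ Γ and a vertex p ∈ Γ₁, and let Γ₀ be the disjoint union of Γ and Γ₁ together with new edges joining q to every neighbor of p in Γ₁. Then the function equal to f₁ on V(Γ₁) and 0 on V(Γ) is an eigenfunction of the normalized Laplacian of Γ₀ for the eigenvalue 1; in particular 1 is an eigenvalue of Γ₀. -/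
open Finset

variable {V W : Type*}

/-- Coupling: the disjoint union of `G` and `H` together with additional edges joining the
vertex `p` of `G` to every vertex of `H` lying in `c`. -/
def SimpleGraph.coupleOne [DecidableEq V] (G : SimpleGraph V) (H : SimpleGraph W)
    (p : V) (c : Finset W) : SimpleGraph (V ⊕ W) where
  Adj x y :=
    match x, y with
    | Sum.inl a, Sum.inl b => G.Adj a b
    | Sum.inl a, Sum.inr b => a = p ∧ b ∈ c
    | Sum.inr a, Sum.inl b => b = p ∧ a ∈ c
    | Sum.inr a, Sum.inr b => H.Adj a b
  symm := by
    constructor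
    rintro (a | a) (b | b) h
    · exact G.adj_symm h
    · exact h
    · exact h
    · exact H.adj_symm h
  loopless := by
    constructor
    rintro (a | a) h
    · exact G.irrefl h
    · exact H.irrefl h

instance [DecidableEq V] [DecidableEq W] (G : SimpleGraph V) (H : SimpleGraph W)
    [DecidableRel G.Adj] [DecidableRel H.Adj] (p : V) (c : Finset W) :
    DecidableRel (G.coupleOne H p c).Adj := fun x y =>
  match x, y with
  | Sum.inl a, Sum.inl b => inferInstanceAs (Decidable (G.Adj a b))
  | Sum.inl a, Sum.inr b => inferInstanceAs (Decidable (a = p ∧ b ∈ c))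
  | Sum.inr a, Sum.inl b => inferInstanceAs (Decidable (b = p ∧ a ∈ c))
  | Sum.inr a, Sum.inr b => inferInstanceAs (Decidable (H.Adj a b))

/-- **Theorem 2.** If `Γ₁` has an eigenfunction `f₁` of its normalized
Laplacian for the eigenvalue `1`, and `Γ₀` is obtained from the disjoint union of `Γ` and
`Γ₁` by joining a vertex `q ∈ Γ` to every neighbor of a vertex `p ∈ Γ₁`, then the function
equal to `f₁` on `Γ₁` and `0` on `Γ` is an eigenfunction of the normalized Laplacian of
`Γ₀` for the eigenvalue `1`; in particular `1` is an eigenvalue of `Γ₀`. -/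
theorem coupleOne_isLapEigenfunction_one
    {V W : Type*} [Fintype V] [Fintype W] [DecidableEq V] [DecidableEq W]
    (G : SimpleGraph V) (G₁ : SimpleGraph W) [DecidableRel G.Adj] [DecidableRel G₁.Adj]
    (hdegG : ∀ v, 0 < G.degree v) (hdegG₁ : ∀ w, 0 < G₁.degree w)
    (q : V) (p : W) (f₁ : W → ℝ) (hf₁ : G₁.IsLapEigenfunction 1 f₁) :
    (G.coupleOne G₁ q (G₁.neighborFinset p)).IsLapEigenfunction 1 (Sum.elim 0 f₁)
      ∧ (G.coupleOne G₁ q (G₁.neighborFinset p)).IsLapEigenvalue 1 := by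
  obtain ⟨hf₁ne, hf₁⟩ := hf₁
  have key : (G.coupleOne G₁ q (G₁.neighborFinset p)).IsLapEigenfunction 1 (Sum.elim 0 f₁) := by
    constructor
    · intro h
      apply hf₁ne
      funext w
      have := congrFun h (Sum.inr w)
      simpa using this
    · intro i
      rw [show (1 : ℝ) - 1 = 0 by ring, zero_mul, zero_mul]
      have hsum : ∀ x : V ⊕ W, (G.coupleOne G₁ q (G₁.neighborFinset p)).neighborFinset x
          = univ.filter ((G.coupleOne G₁ q (G₁.neighborFinset p)).Adj x) := by
        intro x; ext y; simp [SimpleGraph.mem_neighborFinset]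
      rw [hsum, sum_filter, Fintype.sum_sum_type]
      cases i with
      | inl a =>
        have h1 : ∀ b : V, (if (G.coupleOne G₁ q (G₁.neighborFinset p)).Adj (Sum.inl a) (Sum.inl b)
            then Sum.elim (0 : V → ℝ) f₁ (Sum.inl b) else 0) = 0 := by
          intro b; simp [SimpleGraph.coupleOne]
        have h2 : ∀ b : W, (if (G.coupleOne G₁ q (G₁.neighborFinset p)).Adj (Sum.inl a) (Sum.inr b)
            then Sum.elim (0 : V → ℝ) f₁ (Sum.inr b) else 0)
            = (if a = q ∧ b ∈ G₁.neighborFinset p then f₁ b else 0) := by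
          intro b; simp [SimpleGraph.coupleOne]
        simp only [h1, h2, Finset.sum_const_zero, zero_add]
        by_cases ha : a = q
        · have : ∑ b : W, (if a = q ∧ b ∈ G₁.neighborFinset p then f₁ b else 0)
              = ∑ b ∈ G₁.neighborFinset p, f₁ b := by
            rw [← sum_filter]
            congr 1
            ext b; simp [ha]
          rw [this, hf₁ p]
          ring
        · apply Finset.sum_eq_zero
          intro b _
          simp [ha]
      | inr w =>
        have h1 : ∀ b : V, (if (G.coupleOne G₁ q (G₁.neighborFinset p)).Adj (Sum.inr w) (Sum.inl b)
            then Sum.elim (0 : V → ℝ) f₁ (Sum.inl b) else 0) = 0 := by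
          intro b; simp [SimpleGraph.coupleOne]
        have h2 : ∀ b : W, (if (G.coupleOne G₁ q (G₁.neighborFinset p)).Adj (Sum.inr w) (Sum.inr b)
            then Sum.elim (0 : V → ℝ) f₁ (Sum.inr b) else 0)
            = (if G₁.Adj w b then f₁ b else 0) := by
          intro b; simp [SimpleGraph.coupleOne]
        simp only [h1, h2, Finset.sum_const_zero, zero_add]
        rw [← sum_filter]
        have : univ.filter (G₁.Adj w) = G₁.neighborFinset w := by
          ext b; simp [SimpleGraph.mem_neighborFinset]
        rw [this, hf₁ w]
        ring
  exact ⟨key, ⟨_, key⟩⟩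
end

section
/- Let Γ be a finite simple graph with every vertex of positive degree, and let p₁ ∼ p₂ be an edge of Γ, with n₁, n₂ the degrees in Γ of p₁, p₂. Let Γ' be obtained from Γ by doubling the edge motif {p₁,p₂}: add new vertices q₁ ∼ q₂, and join q_α (α = 1,2) to every neighbor of p_α in Γ other than p₁, p₂. Then both λ = 1 + 1/√(n₁·n₂) and λ = 1 − 1/√(n₁·n₂) are eigenvalues of the normalized Laplacian of Γ'. -/
open Finset

variable {V W : Type*}

private lemma sum_two_point {V : Type*} [Fintype V] [DecidableEq V] (t : Finset V)
    (p₁ p₂ : V) (hne : p₁ ≠ p₂) (c d : ℝ) :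
    ∑ a ∈ t, (if a = p₁ then c else if a = p₂ then d else 0)
      = (if p₁ ∈ t then c else 0) + (if p₂ ∈ t then d else 0) := by
  have h : ∀ a ∈ t, (if a = p₁ then c else if a = p₂ then d else 0)
      = (if a = p₁ then c else 0) + (if a = p₂ then d else 0) := by
    intro a _
    by_cases h1 : a = p₁ <;> by_cases h2 : a = p₂ <;> simp_all
  rw [Finset.sum_congr rfl h, Finset.sum_add_distrib,
    Finset.sum_ite_eq' t p₁ fun _ => c, Finset.sum_ite_eq' t p₂ fun _ => d]

private lemma pair_eig
    {V : Type*} [Fintype V] [DecidableEq V] (G : SimpleGraph V) [DecidableRel G.Adj]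
    (hdeg : ∀ v, 0 < G.degree v) (p₁ p₂ : V) (h12 : G.Adj p₁ p₂) (ε : ℝ) (hε : ε * ε = 1) :
    (G.doubleMotif {p₁, p₂}).IsLapEigenvalue
        (1 - ε / Real.sqrt ((G.degree p₁ : ℝ) * (G.degree p₂ : ℝ))) := by
  classical
  have hne : p₁ ≠ p₂ := h12.ne
  set s : Finset V := {p₁, p₂} with hs
  have hp₁s : p₁ ∈ s := by simp [hs]
  have hp₂s : p₂ ∈ s := by simp [hs]
  set n₁ : ℝ := (G.degree p₁ : ℝ) with hn₁def
  set n₂ : ℝ := (G.degree p₂ : ℝ) with hn₂def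
  have hn₁ : 0 < n₁ := by rw [hn₁def]; exact_mod_cast hdeg p₁
  have hn₂ : 0 < n₂ := by rw [hn₂def]; exact_mod_cast hdeg p₂
  set r₁ := Real.sqrt n₁ with hr₁def
  set r₂ := Real.sqrt n₂ with hr₂def
  have hr₁ : 0 < r₁ := Real.sqrt_pos.2 hn₁
  have hr₂ : 0 < r₂ := Real.sqrt_pos.2 hn₂
  have hr₁sq : r₁ * r₁ = n₁ := Real.mul_self_sqrt hn₁.le
  have hr₂sq : r₂ * r₂ = n₂ := Real.mul_self_sqrt hn₂.le
  have hsqrt : Real.sqrt (n₁ * n₂) = r₁ * r₂ := Real.sqrt_mul hn₁.le n₂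
  set G' := G.doubleMotif s with hG'
  set f : V ⊕ {x // x ∈ s} → ℝ :=
    Sum.elim (fun v => if v = p₁ then r₂ else if v = p₂ then ε * r₁ else 0)
      (fun q => -(if q.1 = p₁ then r₂ else ε * r₁)) with hfdef
  have fl : ∀ v : V, f (Sum.inl v)
      = if v = p₁ then r₂ else if v = p₂ then ε * r₁ else 0 := fun _ => rfl
  have fr : ∀ q : {x // x ∈ s}, f (Sum.inr q)
      = -(if q.1 = p₁ then r₂ else ε * r₁) := fun _ => rfl
  have adj_ll : ∀ v w : V, G'.Adj (Sum.inl v) (Sum.inl w) ↔ G.Adj v w := fun _ _ => Iff.rfl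
  have adj_lr : ∀ (v : V) (q : {x // x ∈ s}),
      G'.Adj (Sum.inl v) (Sum.inr q) ↔ v ∉ s ∧ G.Adj v q.1 := fun _ _ => Iff.rfl
  have adj_rl : ∀ (q : {x // x ∈ s}) (w : V),
      G'.Adj (Sum.inr q) (Sum.inl w) ↔ w ∉ s ∧ G.Adj q.1 w := fun _ _ => Iff.rfl
  have adj_rr : ∀ (q r : {x // x ∈ s}),
      G'.Adj (Sum.inr q) (Sum.inr r) ↔ G.Adj q.1 r.1 := fun _ _ => Iff.rfl
  -- degree computations
  have deg_inl : ∀ p : V, p ∈ s → G'.degree (Sum.inl p) = G.degree p := by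
    intro p hp
    have hnb : G'.neighborFinset (Sum.inl p)
        = (G.neighborFinset p).map ⟨Sum.inl, Sum.inl_injective⟩ := by
      ext x
      rcases x with w | b
      · simp [SimpleGraph.mem_neighborFinset, adj_ll]
      · simp [SimpleGraph.mem_neighborFinset, adj_lr, hp]
    rw [SimpleGraph.degree, hnb, Finset.card_map]
    rfl
  have deg_inr : ∀ (a b : V), G.Adj a b → a ∈ s → (hbs : b ∈ s) → s = {a, b} →
      ∀ (q : {x // x ∈ s}), q.1 = a → G'.degree (Sum.inr q) = G.degree a := by
    intro a b hab has hbs hsab q hq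
    have hnb : G'.neighborFinset (Sum.inr q)
        = insert (Sum.inr (⟨b, hbs⟩ : {x // x ∈ s}))
            (((G.neighborFinset a).erase b).map ⟨Sum.inl, Sum.inl_injective⟩) := by
      ext x
      rcases x with w | r
      · simp only [SimpleGraph.mem_neighborFinset, adj_rl, hq, Finset.mem_insert,
          Finset.mem_map, Finset.mem_erase, SimpleGraph.mem_neighborFinset,
          Function.Embedding.coeFn_mk]
        constructor
        · rintro ⟨hw, hadj⟩
          refine Or.inr ⟨w, ⟨?_, hadj⟩, rfl⟩
          intro h; exact hw (h ▸ hbs)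
        · rintro (h | ⟨y, ⟨hyb, hadj⟩, hy⟩)
          · exact absurd h (by simp)
          · cases Sum.inl.inj hy
            refine ⟨?_, hadj⟩
            rw [hsab]
            simp only [Finset.mem_insert, Finset.mem_singleton]
            rintro (rfl | rfl)
            · exact hadj.ne rfl
            · exact hyb rfl
      · obtain ⟨x, hx⟩ := r
        simp only [SimpleGraph.mem_neighborFinset, adj_rr, hq, Finset.mem_insert,
          Finset.mem_map, Function.Embedding.coeFn_mk]
        constructor
        · intro hadj
          left
          have hx' : x = a ∨ x = b := by
            have h2 := hx
            rw [hsab] at h2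
            simpa using h2
          rcases hx' with h | h
          · exact absurd (h ▸ hadj) (G.irrefl)
          · exact congrArg Sum.inr (Subtype.ext h)
        · rintro (h | ⟨y, _, hy⟩)
          · cases h; exact hab
          · exact absurd hy (by simp)
    rw [SimpleGraph.degree, hnb, Finset.card_insert_of_notMem (by simp),
      Finset.card_map, Finset.card_erase_add_one (by simp [hab])]
    rfl
  -- algebraic identities
  have id1 : ε / (r₁ * r₂) * n₁ * r₂ = ε * r₁ := by
    rw [← hr₁sq]; field_simp
  have id2 : ε / (r₁ * r₂) * n₂ * (ε * r₁) = r₂ := by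
    rw [← hr₂sq]; field_simp; linear_combination hε
  have id3 : ε / (r₁ * r₂) * n₁ * (-r₂) = -(ε * r₁) := by
    rw [← hr₁sq]; field_simp
  have id4 : ε / (r₁ * r₂) * n₂ * (-(ε * r₁)) = -r₂ := by
    rw [← hr₂sq]; field_simp; linear_combination -hε
  refine ⟨f, fun h => ?_, fun i => ?_⟩
  · have h0 := congrFun h (Sum.inl p₁)
    rw [fl p₁, if_pos rfl] at h0
    exact hr₂.ne' h0
  have hμ : 1 - (1 - ε / Real.sqrt (n₁ * n₂)) = ε / (r₁ * r₂) := by rw [hsqrt]; ring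
  rw [hμ]
  rcases i with v | q
  · -- vertex in the original copy
    rw [SimpleGraph.neighborFinset_eq_filter, Finset.sum_filter, Fintype.sum_sum_type]
    have h1 : (∑ a : V, if G'.Adj (Sum.inl v) (Sum.inl a) then f (Sum.inl a) else 0)
        = (if G.Adj v p₁ then r₂ else 0) + (if G.Adj v p₂ then ε * r₁ else 0) := by
      have step : ∀ a : V, (if G'.Adj (Sum.inl v) (Sum.inl a) then f (Sum.inl a) else 0)
          = (if a = p₁ then (if G.Adj v p₁ then r₂ else 0) else
              if a = p₂ then (if G.Adj v p₂ then ε * r₁ else 0) else 0) := by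
        intro a
        simp only [adj_ll, fl]
        by_cases h1 : a = p₁
        · subst h1
          by_cases h3 : G.Adj v a <;> simp [h3]
        · by_cases h2 : a = p₂
          · subst h2
            by_cases h3 : G.Adj v a <;> simp [h3, h1]
          · simp [h1, h2]
      rw [Finset.sum_congr rfl (fun a _ => step a),
        sum_two_point Finset.univ p₁ p₂ hne]
      simp
    have h2 : (∑ b : {x // x ∈ s}, if G'.Adj (Sum.inl v) (Sum.inr b) then f (Sum.inr b) else 0)
        = (if v ∉ s ∧ G.Adj v p₁ then -r₂ else 0)
          + (if v ∉ s ∧ G.Adj v p₂ then -(ε * r₁) else 0) := by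
      have step : ∀ b : {x // x ∈ s},
          (if G'.Adj (Sum.inl v) (Sum.inr b) then f (Sum.inr b) else 0)
            = if v ∉ s ∧ G.Adj v b.1 then -(if b.1 = p₁ then r₂ else ε * r₁) else 0 := by
        intro b
        simp only [adj_lr, fr]
      rw [Finset.sum_congr rfl (fun b _ => step b),
        ← Finset.sum_subtype s (fun x => Iff.rfl)
          (fun x => if v ∉ s ∧ G.Adj v x then -(if x = p₁ then r₂ else ε * r₁) else 0),
        hs, Finset.sum_pair hne, if_pos rfl, if_neg (Ne.symm hne)]
    rw [h1, h2, fl v]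
    by_cases hv1 : v = p₁
    · subst hv1
      rw [deg_inl v hp₁s, ← hn₁def, if_pos rfl,
        if_neg (G.loopless.irrefl v), if_pos h12,
        if_neg (fun hc : v ∉ s ∧ G.Adj v v => hc.1 hp₁s),
        if_neg (fun hc : v ∉ s ∧ G.Adj v p₂ => hc.1 hp₁s), id1]
      ring
    · by_cases hv2 : v = p₂
      · subst hv2
        rw [deg_inl v hp₂s, ← hn₂def, if_neg hv1, if_pos rfl,
          if_pos h12.symm, if_neg (G.loopless.irrefl v),
          if_neg (fun hc : v ∉ s ∧ G.Adj v p₁ => hc.1 hp₂s),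
          if_neg (fun hc : v ∉ s ∧ G.Adj v v => hc.1 hp₂s), id2]
        ring
      · have hv : v ∉ s := by rw [hs]; simp [hv1, hv2]
        rw [if_neg hv1, if_neg hv2, mul_zero]
        by_cases hA : G.Adj v p₁ <;> by_cases hB : G.Adj v p₂ <;>
          simp [hA, hB, hv] <;> try ring
  · -- vertex in the new copy
    obtain ⟨x, hx⟩ := q
    rw [SimpleGraph.neighborFinset_eq_filter, Finset.sum_filter, Fintype.sum_sum_type]
    have h1 : (∑ a : V, if G'.Adj (Sum.inr ⟨x, hx⟩) (Sum.inl a) then f (Sum.inl a) else 0)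
        = 0 := by
      apply Finset.sum_eq_zero
      intro a _
      simp only [adj_rl, fl]
      by_cases h : a ∉ s ∧ G.Adj x a
      · rw [if_pos h, if_neg (show ¬a = p₁ from fun e => h.1 (by rw [e]; exact hp₁s)),
          if_neg (show ¬a = p₂ from fun e => h.1 (by rw [e]; exact hp₂s))]
      · rw [if_neg h]
    have h2 : (∑ b : {x // x ∈ s},
          if G'.Adj (Sum.inr ⟨x, hx⟩) (Sum.inr b) then f (Sum.inr b) else 0)
        = (if G.Adj x p₁ then -r₂ else 0) + (if G.Adj x p₂ then -(ε * r₁) else 0) := by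
      have step : ∀ b : {x // x ∈ s},
          (if G'.Adj (Sum.inr ⟨x, hx⟩) (Sum.inr b) then f (Sum.inr b) else 0)
            = if G.Adj x b.1 then -(if b.1 = p₁ then r₂ else ε * r₁) else 0 := by
        intro b
        simp only [adj_rr, fr]
      rw [Finset.sum_congr rfl (fun b _ => step b),
        ← Finset.sum_subtype s (fun y => Iff.rfl)
          (fun y => if G.Adj x y then -(if y = p₁ then r₂ else ε * r₁) else 0),
        hs, Finset.sum_pair hne, if_pos rfl, if_neg (Ne.symm hne)]
    rw [h1, h2, fr ⟨x, hx⟩]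
    have hx' : x = p₁ ∨ x = p₂ := by
      have h2 := hx
      rw [hs] at h2
      simpa using h2
    rcases hx' with h | h
    · rw [deg_inr p₁ p₂ h12 hp₁s hp₂s hs ⟨x, hx⟩ h, ← hn₁def,
        if_neg (show ¬G.Adj x p₁ by rw [h]; exact G.loopless.irrefl p₁),
        if_pos (show G.Adj x p₂ by rw [h]; exact h12),
        if_pos h, id3]
      ring
    · rw [deg_inr p₂ p₁ h12.symm hp₂s hp₁s (by rw [hs]; exact Finset.pair_comm p₁ p₂) ⟨x, hx⟩ h,
        ← hn₂def,
        if_pos (show G.Adj x p₁ by rw [h]; exact h12.symm),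
        if_neg (show ¬G.Adj x p₂ by rw [h]; exact G.loopless.irrefl p₂),
        if_neg (show ¬x = p₁ by rw [h]; exact Ne.symm hne), id4]
      ring

/-- Doubling an edge `p₁ ∼ p₂` of `Γ` (as a two-vertex motif) produces the
two eigenvalues `1 ± 1/√(n₁ n₂)` of the normalized Laplacian, where `n₁, n₂` are the
degrees of `p₁, p₂` in `Γ`. -/
theorem doubleMotif_edge_eigenvalues
    {V : Type*} [Fintype V] [DecidableEq V] (G : SimpleGraph V) [DecidableRel G.Adj]
    (hdeg : ∀ v, 0 < G.degree v) (p₁ p₂ : V) (h12 : G.Adj p₁ p₂) :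
    (G.doubleMotif {p₁, p₂}).IsLapEigenvalue
        (1 + 1 / Real.sqrt ((G.degree p₁ : ℝ) * (G.degree p₂ : ℝ)))
      ∧ (G.doubleMotif {p₁, p₂}).IsLapEigenvalue
        (1 - 1 / Real.sqrt ((G.degree p₁ : ℝ) * (G.degree p₂ : ℝ))) := by
  constructor
  · have h := pair_eig G hdeg p₁ p₂ h12 (-1) (by ring)
    rw [show (1 : ℝ) - (-1) / Real.sqrt ((G.degree p₁ : ℝ) * (G.degree p₂ : ℝ))
        = 1 + 1 / Real.sqrt ((G.degree p₁ : ℝ) * (G.degree p₂ : ℝ)) by ring] at h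
    exact h
  · exact pair_eig G hdeg p₁ p₂ h12 1 (by ring)
end

section
/- (Theorem 4) Let Γ be a finite simple graph with every vertex of positive degree, let Σ be a motif of Γ on vertices p_1, …, p_k, and suppose a nonzero function f on the vertices of Σ satisfies (1/n_{p_i})·∑_{p_j ∈ Σ, p_j ∼ p_i} f(p_j) = (1−λ)·f(p_i) for all i and some real λ, where n_{p_i} is the degree of p_i in Γ. Let Γ^{Σ^m} be obtained from Γ by duplicating Σ m times (for each l = 1,…,m, new vertices q^{(l)}_1,…,q^{(l)}_k with q^{(l)}_α ∼ q^{(l)}_β iff p_α ∼ p_β, and q^{(l)}_α joined to every neighbor p ∉ Σ of p_α in Γ; distinct copies are not joined to each other nor to Σ). Then λ is an eigenvalue of the normalized Laplacian of Γ^{Σ^m} with multiplicity at least m; explicitly, for j = 1,…,m the function equal to f(p_α) at p_α and at q^{(l)}_α for 1 ≤ l ≤ j−1, equal to −j·f(p_α) at q^{(j)}_α, and 0 elsewhere, is an eigenfunction for λ, and these m functions are linearly independent. -/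
open Finset

variable {V W : Type*}

section Aux

variable {V : Type*} [Fintype V] [DecidableEq V] (G : SimpleGraph V) [DecidableRel G.Adj]
  (s : Finset V) (m : ℕ)

lemma dmm_sum_nbr (i : V ⊕ Fin m × {x // x ∈ s}) (h : (V ⊕ Fin m × {x // x ∈ s}) → ℝ) :
    ∑ x ∈ (G.doubleMotifMany s m).neighborFinset i, h x
      = (∑ b : V, if (G.doubleMotifMany s m).Adj i (Sum.inl b) then h (Sum.inl b) else 0)
        + ∑ l : Fin m, ∑ b : {x // x ∈ s},
            if (G.doubleMotifMany s m).Adj i (Sum.inr (l, b)) then h (Sum.inr (l, b)) else 0 := by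
  rw [SimpleGraph.neighborFinset_eq_filter, Finset.sum_filter, Fintype.sum_sum_type,
    Fintype.sum_prod_type]

lemma dmm_degree_inl_mem {a : V} (ha : a ∈ s) :
    (G.doubleMotifMany s m).degree (Sum.inl a) = G.degree a := by
  show ((G.doubleMotifMany s m).neighborFinset (Sum.inl a)).card = (G.neighborFinset a).card
  rw [SimpleGraph.neighborFinset_eq_filter, SimpleGraph.neighborFinset_eq_filter,
    Finset.card_filter, Finset.card_filter, Fintype.sum_sum_type]
  simp [SimpleGraph.doubleMotifMany, ha]
  exact (Finset.card_filter _ _).symm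

lemma dmm_degree_inr (q : Fin m) (b : {x // x ∈ s}) :
    (G.doubleMotifMany s m).degree (Sum.inr (q, b)) = G.degree b.1 := by
  show ((G.doubleMotifMany s m).neighborFinset (Sum.inr (q, b))).card
    = (G.neighborFinset b.1).card
  rw [SimpleGraph.neighborFinset_eq_filter, SimpleGraph.neighborFinset_eq_filter,
    Finset.card_filter, Finset.card_filter, Fintype.sum_sum_type, Fintype.sum_prod_type]
  have hrl : ∀ (p : Fin m × {x // x ∈ s}) (c : V), (G.doubleMotifMany s m).Adj (Sum.inr p) (Sum.inl c)
      ↔ c ∉ s ∧ G.Adj p.2.1 c := fun _ _ => Iff.rfl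
  have hrr : ∀ p r : Fin m × {x // x ∈ s}, (G.doubleMotifMany s m).Adj (Sum.inr p) (Sum.inr r)
      ↔ p.1 = r.1 ∧ G.Adj p.2.1 r.2.1 := fun _ _ => Iff.rfl
  simp only [hrl, hrr, ite_and]
  rw [Finset.sum_comm (γ := Fin m)]
  simp only [Finset.sum_ite_eq, Finset.mem_univ, if_true]
  rw [Finset.sum_coe_sort s (fun y => if G.Adj b.1 y then 1 else 0)]
  rw [← Finset.sum_filter,
    ← Finset.sum_filter_add_sum_filter_not Finset.univ (· ∈ s)
      (fun i => if G.Adj b.1 i then (1 : ℕ) else 0),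
    Finset.filter_mem_eq_inter, Finset.univ_inter, add_comm]


lemma dmm_adj_ll (a b : V) :
    (G.doubleMotifMany s m).Adj (Sum.inl a) (Sum.inl b) ↔ G.Adj a b := Iff.rfl

lemma dmm_adj_lr (a : V) (p : Fin m × {x // x ∈ s}) :
    (G.doubleMotifMany s m).Adj (Sum.inl a) (Sum.inr p) ↔ a ∉ s ∧ G.Adj a p.2.1 := Iff.rfl

lemma dmm_adj_rl (p : Fin m × {x // x ∈ s}) (b : V) :
    (G.doubleMotifMany s m).Adj (Sum.inr p) (Sum.inl b) ↔ b ∉ s ∧ G.Adj p.2.1 b := Iff.rfl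

lemma dmm_adj_rr (p q : Fin m × {x // x ∈ s}) :
    (G.doubleMotifMany s m).Adj (Sum.inr p) (Sum.inr q)
      ↔ p.1 = q.1 ∧ G.Adj p.2.1 q.2.1 := Iff.rfl

lemma dmm_sum_mem_adj (a : V) (g : V → ℝ) :
    (∑ b : V, if G.Adj a b then (if b ∈ s then g b else 0) else 0)
      = ∑ b ∈ s.filter (fun b => G.Adj a b), g b := by
  have hfilter : Finset.univ.filter (fun b => b ∈ s ∧ G.Adj a b)
      = s.filter (fun b => G.Adj a b) := by ext b; simp
  rw [← hfilter, Finset.sum_filter]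
  exact Finset.sum_congr rfl fun b _ => by
    by_cases h1 : G.Adj a b <;> by_cases h2 : b ∈ s <;> simp [h1, h2]

lemma dmm_sum_subtype_adj (a : V) (g : V → ℝ) :
    (∑ b : {x // x ∈ s}, if G.Adj a b.1 then g b.1 else 0)
      = ∑ b ∈ s.filter (fun b => G.Adj a b), g b := by
  rw [Finset.sum_coe_sort s (fun b => if G.Adj a b then g b else 0), Finset.sum_filter]

lemma dmm_coeff_sum {m : ℕ} (j : Fin m) (c : ℝ) :
    ∑ l : Fin m, (if l < j then c else if l = j then -((j : ℕ) + 1 : ℝ) * c else 0) = -c := by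
  have h1 : ∀ l : Fin m, (if l < j then c else if l = j then -((j : ℕ) + 1 : ℝ) * c else 0)
      = (if l < j then c else 0) + (if l = j then -((j : ℕ) + 1 : ℝ) * c else 0) := by
    intro l
    rcases lt_trichotomy l j with h | h | h
    · simp [h, h.ne]
    · simp [h]
    · simp [h.ne', not_lt_of_gt h]
  rw [Finset.sum_congr rfl fun l _ => h1 l, Finset.sum_add_distrib, Finset.sum_ite_eq']
  rw [Finset.sum_ite, Finset.sum_const, Finset.sum_const_zero, add_zero]
  have h2 : Finset.univ.filter (fun l : Fin m => l < j) = Finset.Iio j := by ext l; simp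
  rw [h2, Fin.card_Iio]
  simp only [Finset.mem_univ, if_true, nsmul_eq_mul]
  ring

end Aux

/-- **Theorem 4.** If a nonzero function `f` on the vertex set `s` of a
motif of `Γ` satisfies `∑_{b ∈ s, b ∼ a} f b = (1 - λ) · deg_Γ a · f a` for all `a ∈ s` and
some real `λ`, then after duplicating the motif `m` times, `λ` is an eigenvalue of the
normalized Laplacian with multiplicity at least `m`; the functions `F j` (equal to `f` on
`s` and on the first `j` copies, `-(j+1)·f` on the `(j+1)`-st copy, `0` elsewhere) are
linearly independent eigenfunctions for `λ`. -/
theorem doubleMotifMany_eigenvalue_multiplicity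
    {V : Type*} [Fintype V] [DecidableEq V] (G : SimpleGraph V) [DecidableRel G.Adj]
    (hdeg : ∀ v, 0 < G.degree v) (s : Finset V) (m : ℕ) (lam : ℝ) (f : V → ℝ)
    (hne : ∃ a ∈ s, f a ≠ 0)
    (heq : ∀ a ∈ s, ∑ b ∈ s.filter (fun b => G.Adj a b), f b
      = (1 - lam) * (G.degree a : ℝ) * f a)
    (F : Fin m → (V ⊕ Fin m × {x // x ∈ s}) → ℝ)
    (hF : ∀ j, F j = Sum.elim (fun a => if a ∈ s then f a else 0)
        (fun q => if q.1 < j then f q.2.1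
          else if q.1 = j then -((j : ℕ) + 1 : ℝ) * f q.2.1 else 0)) :
    (∀ j, (G.doubleMotifMany s m).IsLapEigenfunction lam (F j))
      ∧ LinearIndependent ℝ F
      ∧ m ≤ Module.finrank ℝ ((G.doubleMotifMany s m).lapEigenspace lam) := by
  classical
  obtain ⟨a₀, ha₀, hfa₀⟩ := hne
  -- the eigen-equation holds for every F j at every vertex
  have key : ∀ j : Fin m, ∀ i, ∑ x ∈ (G.doubleMotifMany s m).neighborFinset i, F j x
      = (1 - lam) * ((G.doubleMotifMany s m).degree i : ℝ) * F j i := by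
    intro j i
    rw [dmm_sum_nbr, hF j]
    match i with
    | Sum.inl a =>
      by_cases ha : a ∈ s
      · -- a ∈ s : only the inl-neighbours contribute
        simp only [Sum.elim_inl, Sum.elim_inr, dmm_adj_ll, dmm_adj_lr, ha, not_true_eq_false,
          false_and, if_false, Finset.sum_const_zero, add_zero, if_pos ha,
          dmm_degree_inl_mem G s m ha]
        rw [dmm_sum_mem_adj G s a f]
        exact heq a ha
      · -- a ∉ s : genuine neighbours and copy-neighbours cancel
        simp only [Sum.elim_inl, Sum.elim_inr, dmm_adj_ll, dmm_adj_lr, ha, not_false_eq_true,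
          true_and, if_neg ha, mul_zero]
        rw [dmm_sum_mem_adj G s a f, Finset.sum_comm]
        have hrow : ∀ b : {x // x ∈ s},
            (∑ l : Fin m, if G.Adj a b.1 then
                (if (l, b).1 < j then f (l, b).2.1
                  else if (l, b).1 = j then -((j : ℕ) + 1 : ℝ) * f (l, b).2.1 else 0) else 0)
              = if G.Adj a b.1 then -f b.1 else 0 := by
          intro b
          by_cases hab : G.Adj a b.1
          · simp only [if_pos hab]
            exact dmm_coeff_sum j (f b.1)
          · simp [hab]
        rw [Finset.sum_congr rfl fun b _ => hrow b, dmm_sum_subtype_adj G s a (fun b => -f b)]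
        rw [Finset.sum_neg_distrib]
        simp
    | Sum.inr p =>
      obtain ⟨q, b⟩ := p
      -- the inl-neighbours all lie outside s, where F j vanishes
      have h1 : (∑ c : V, if (G.doubleMotifMany s m).Adj (Sum.inr (q, b)) (Sum.inl c)
          then (if c ∈ s then f c else 0) else 0) = 0 := by
        refine Finset.sum_eq_zero fun c _ => ?_
        by_cases hc : (G.doubleMotifMany s m).Adj (Sum.inr (q, b)) (Sum.inl c)
        · rw [if_pos hc, if_neg ((dmm_adj_rl G s m (q, b) c).mp hc).1]
        · rw [if_neg hc]
      simp only [Sum.elim_inl, Sum.elim_inr] at h1 ⊢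
      rw [h1, zero_add]
      simp only [dmm_adj_rr, ite_and]
      rw [Finset.sum_comm]
      simp only [Finset.sum_ite_eq, Finset.mem_univ, if_true]
      set e : ℝ := if q < j then 1 else if q = j then -((j : ℕ) + 1 : ℝ) else 0 with he
      have hval : ∀ c : {x // x ∈ s},
          (if (q, c).1 < j then f (q, c).2.1
            else if (q, c).1 = j then -((j : ℕ) + 1 : ℝ) * f (q, c).2.1 else 0) = e * f c.1 := by
        intro c
        rcases lt_trichotomy q j with h | h | h
        · simp [he, h]
        · simp [he, h]
        · simp [he, h.ne', not_lt_of_gt h]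
      have h2 : (∑ c : {x // x ∈ s}, if G.Adj b.1 c.1 then
          (if (q, c).1 < j then f (q, c).2.1
            else if (q, c).1 = j then -((j : ℕ) + 1 : ℝ) * f (q, c).2.1 else 0) else 0)
          = e * ∑ c ∈ s.filter (fun c => G.Adj b.1 c), f c := by
        rw [Finset.mul_sum, ← dmm_sum_subtype_adj G s b.1 (fun c => e * f c)]
        refine Finset.sum_congr rfl fun c _ => ?_
        by_cases hc : G.Adj b.1 c.1
        · rw [if_pos hc, if_pos hc, hval c]
        · rw [if_neg hc, if_neg hc]
      rw [h2, heq b.1 b.2, dmm_degree_inr G s m q b, hval b]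
      ring
  have part1 : ∀ j, (G.doubleMotifMany s m).IsLapEigenfunction lam (F j) := by
    intro j
    refine ⟨fun h0 => hfa₀ ?_, key j⟩
    have := congrFun h0 (Sum.inl a₀)
    rw [hF j] at this
    simpa [ha₀] using this
  have part2 : LinearIndependent ℝ F := by
    rw [Fintype.linearIndependent_iff]
    intro g hg
    have E : ∀ l : Fin m,
        (∑ i ∈ Finset.univ.filter (fun i : Fin m => l < i), g i)
          - ((l : ℕ) + 1 : ℝ) * g l = 0 := by
      intro l
      have h0 := congrFun hg (Sum.inr (l, ⟨a₀, ha₀⟩))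
      simp only [Finset.sum_apply, Pi.smul_apply, smul_eq_mul, Pi.zero_apply] at h0
      have h1 : ∀ i : Fin m, g i * F i (Sum.inr (l, ⟨a₀, ha₀⟩))
          = ((if l < i then g i else 0)
              + (if i = l then -((l : ℕ) + 1 : ℝ) * g i else 0)) * f a₀ := by
        intro i
        rw [hF i]
        rcases lt_trichotomy l i with h | h | h
        · simp only [Sum.elim_inr, if_pos h, if_neg h.ne']
          ring
        · subst h
          simp [lt_self_iff_false]
          try ring
        · simp only [Sum.elim_inr, if_neg (not_lt_of_gt h), if_neg h.ne', if_neg h.ne]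
          ring
      rw [Finset.sum_congr rfl fun i _ => h1 i, ← Finset.sum_mul] at h0
      rcases mul_eq_zero.mp h0 with h | h
      · rw [Finset.sum_add_distrib, Finset.sum_ite_eq' Finset.univ l, if_pos (Finset.mem_univ l),
          ← Finset.sum_filter] at h
        linarith [h]
      · exact absurd h hfa₀
    have claim : ∀ n : ℕ, ∀ l : Fin m, m - l.val ≤ n → g l = 0 := by
      intro n
      induction n with
      | zero => intro l hl; have := l.isLt; omega
      | succ n ih =>
        intro l hl
        have hz : ∑ i ∈ Finset.univ.filter (fun i : Fin m => l < i), g i = 0 :=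
          Finset.sum_eq_zero fun i hi => ih i (by
            have h2 : l.val < i.val := Fin.lt_def.mp (Finset.mem_filter.mp hi).2
            have h3 := i.isLt
            omega)
        have hE := E l
        rw [hz, zero_sub, neg_eq_zero] at hE
        rcases mul_eq_zero.mp hE with h | h
        · exact absurd h (by positivity)
        · exact h
    exact fun l => claim m l (by omega)
  refine ⟨part1, part2, ?_⟩
  let F' : Fin m → ((G.doubleMotifMany s m).lapEigenspace lam) := fun j => ⟨F j, key j⟩
  have hF' : LinearIndependent ℝ F' := by
    apply LinearIndependent.of_comp ((G.doubleMotifMany s m).lapEigenspace lam).subtype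
    exact part2
  simpa using hF'.fintype_card_le_finrank
end

section
/- (Theorem 5) Let Γ and Σ be disjoint finite simple graphs, let Σ_c be an induced subgraph of Σ, fix a vertex p ∈ Γ, and let Γ^Σ be the graph consisting of Γ, Σ, and additional edges joining p to every vertex of Σ_c. Assume every vertex of Γ^Σ has positive degree. Suppose a nonzero function f on V(Σ) satisfies (1/n_i)·∑_{j ∈ Σ, j ∼ i} f(j) = (1−λ)·f(i) for all i ∈ Σ and some real λ, where n_i is the degree of i in Γ^Σ, and moreover ∑_{j ∈ Σ_c} f(j) = 0. Then the function equal to f on V(Σ) and 0 on V(Γ) is an eigenfunction of the normalized Laplacian of Γ^Σ for the eigenvalue λ. -/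
open Finset

variable {V W : Type*}

/-- **Theorem 5.** Join a vertex `p` of `Γ` to every vertex of an induced
subgraph `Σ_c` (vertex set `c`) of a disjoint graph `Σ`.  If a nonzero `f` on `V(Σ)`
satisfies the motif eigenvalue equation for `λ` (with degrees taken in the coupled graph)
and `∑_{j ∈ c} f j = 0`, then the extension of `f` by `0` on `V(Γ)` is an eigenfunction of
the normalized Laplacian of the coupled graph for the eigenvalue `λ`. -/
theorem coupleOne_isLapEigenfunction
    {V W : Type*} [Fintype V] [Fintype W] [DecidableEq V] [DecidableEq W]
    (G : SimpleGraph V) (H : SimpleGraph W) [DecidableRel G.Adj] [DecidableRel H.Adj]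
    (p : V) (c : Finset W) (lam : ℝ)
    (hdeg : ∀ x, 0 < (G.coupleOne H p c).degree x)
    (f : W → ℝ) (hne : f ≠ 0)
    (heq : ∀ i : W, ∑ j ∈ H.neighborFinset i, f j
      = (1 - lam) * ((G.coupleOne H p c).degree (Sum.inr i) : ℝ) * f i)
    (hc : ∑ j ∈ c, f j = 0) :
    (G.coupleOne H p c).IsLapEigenfunction lam (Sum.elim 0 f) := by
  constructor
  · intro h
    apply hne
    funext w
    have := congrFun h (Sum.inr w)
    simpa using this
  · have key : ∀ x : V ⊕ W, ∑ j ∈ (G.coupleOne H p c).neighborFinset x, Sum.elim (0 : V → ℝ) f j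
        = (∑ b : V, if (G.coupleOne H p c).Adj x (Sum.inl b) then Sum.elim (0 : V → ℝ) f (Sum.inl b) else 0)
        + (∑ b : W, if (G.coupleOne H p c).Adj x (Sum.inr b) then Sum.elim (0 : V → ℝ) f (Sum.inr b) else 0) := by
      intro x
      rw [SimpleGraph.neighborFinset_eq_filter, Finset.sum_filter, Fintype.sum_sum_type]
    rintro (a | a)
    · rw [key]
      simp only [Sum.elim_inl, Sum.elim_inr, Pi.zero_apply, ite_self, Finset.sum_const_zero,
        zero_add]
      have : ∑ b : W, (if (G.coupleOne H p c).Adj (Sum.inl a) (Sum.inr b) then f b else 0)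
          = if a = p then ∑ b ∈ c, f b else 0 := by
        by_cases hap : a = p
        · simp only [hap, if_true]
          rw [← Finset.sum_filter]
          apply Finset.sum_congr _ (fun b _ => rfl)
          ext b
          simp [SimpleGraph.coupleOne]
        · simp only [hap, if_false]
          apply Finset.sum_eq_zero
          intro b _
          simp [SimpleGraph.coupleOne, hap]
      rw [this, hc]
      simp
    · rw [key]
      simp only [Sum.elim_inl, Sum.elim_inr, Pi.zero_apply, ite_self, Finset.sum_const_zero,
        zero_add]
      have : ∑ b : W, (if (G.coupleOne H p c).Adj (Sum.inr a) (Sum.inr b) then f b else 0)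
          = ∑ j ∈ H.neighborFinset a, f j := by
        rw [SimpleGraph.neighborFinset_eq_filter, Finset.sum_filter]
        exact Finset.sum_congr rfl fun b _ => by simp [SimpleGraph.coupleOne]; congr
      rw [this, heq]
end

section
/- Let m, n ≥ 2 and let K(m,n) be the kite graph on m + n + 1 vertices obtained from the disjoint union of complete graphs K_m and K_n by adding one new vertex α joined by an edge to every vertex of K_m and of K_n. Then the normalized Laplacian of K(m,n) has eigenvalue (m+1)/m with multiplicity at least m − 1 and eigenvalue (n+1)/n with multiplicity at least n − 1. Moreover, for m = n, the spectrum of the normalized Laplacian of K(m,m) consists exactly of the eigenvalue 0 with multiplicity 1, the eigenvalue (m+1)/m with multiplicity 2m − 1, and the eigenvalue 1/m with multiplicity 1. -/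
open Finset

variable {V W : Type*}

/-- The kite `K(m,n)`: the disjoint union of the complete graphs `K_m` and `K_n`,
with one additional common vertex `α` (represented by `none`) joined to every other
vertex. -/
def kite (m n : ℕ) : SimpleGraph (Option (Fin m ⊕ Fin n)) where
  Adj x y :=
    match x, y with
    | none, none => False
    | none, some _ => True
    | some _, none => True
    | some (Sum.inl a), some (Sum.inl b) => a ≠ b
    | some (Sum.inr a), some (Sum.inr b) => a ≠ b
    | some (Sum.inl _), some (Sum.inr _) => False
    | some (Sum.inr _), some (Sum.inl _) => False
  symm := by
    constructor
    rintro (_ | (a | a)) (_ | (b | b)) h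
    · exact h
    · exact trivial
    · exact trivial
    · exact trivial
    · exact fun e => h e.symm
    · exact h
    · exact trivial
    · exact h
    · exact fun e => h e.symm
  loopless := by
    constructor
    rintro (_ | (a | a)) h
    · exact h
    · exact h rfl
    · exact h rfl

instance (m n : ℕ) : DecidableRel (kite m n).Adj := fun x y =>
  match x, y with
  | none, none => inferInstanceAs (Decidable False)
  | none, some _ => inferInstanceAs (Decidable True)
  | some (Sum.inl _), none => inferInstanceAs (Decidable True)
  | some (Sum.inr _), none => inferInstanceAs (Decidable True)
  | some (Sum.inl a), some (Sum.inl b) => inferInstanceAs (Decidable (a ≠ b))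
  | some (Sum.inr a), some (Sum.inr b) => inferInstanceAs (Decidable (a ≠ b))
  | some (Sum.inl _), some (Sum.inr _) => inferInstanceAs (Decidable False)
  | some (Sum.inr _), some (Sum.inl _) => inferInstanceAs (Decidable False)


namespace KiteAux

open Module

variable {m n : ℕ}

noncomputable def Sl (f : Option (Fin m ⊕ Fin n) → ℝ) : ℝ := ∑ a, f (some (Sum.inl a))
noncomputable def Sr (f : Option (Fin m ⊕ Fin n) → ℝ) : ℝ := ∑ a, f (some (Sum.inr a))

lemma sum_nbr_none (f : Option (Fin m ⊕ Fin n) → ℝ) :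
    ∑ j ∈ (kite m n).neighborFinset none, f j = Sl f + Sr f := by
  rw [SimpleGraph.neighborFinset_eq_filter, Finset.sum_filter, Fintype.sum_option,
    Fintype.sum_sum_type]
  simp [kite, Sl, Sr]

lemma sum_nbr_inl (a : Fin m) (f : Option (Fin m ⊕ Fin n) → ℝ) :
    ∑ j ∈ (kite m n).neighborFinset (some (Sum.inl a)), f j
      = f none + Sl f - f (some (Sum.inl a)) := by
  rw [SimpleGraph.neighborFinset_eq_filter, Finset.sum_filter, Fintype.sum_option,
    Fintype.sum_sum_type]
  have h1 : ∀ b : Fin m, (if (kite m n).Adj (some (Sum.inl a)) (some (Sum.inl b))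
      then f (some (Sum.inl b)) else 0)
      = f (some (Sum.inl b)) - (if b = a then f (some (Sum.inl b)) else 0) := by
    intro b
    by_cases h : b = a
    · simp [kite, h]
    · simp [kite, h, if_neg (Ne.symm h), Ne.symm h]
  simp only [h1, Finset.sum_sub_distrib, Finset.sum_ite_eq' Finset.univ a]
  simp [kite, Sl]
  ring

lemma sum_nbr_inr (a : Fin n) (f : Option (Fin m ⊕ Fin n) → ℝ) :
    ∑ j ∈ (kite m n).neighborFinset (some (Sum.inr a)), f j
      = f none + Sr f - f (some (Sum.inr a)) := by
  rw [SimpleGraph.neighborFinset_eq_filter, Finset.sum_filter, Fintype.sum_option,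
    Fintype.sum_sum_type]
  have h1 : ∀ b : Fin n, (if (kite m n).Adj (some (Sum.inr a)) (some (Sum.inr b))
      then f (some (Sum.inr b)) else 0)
      = f (some (Sum.inr b)) - (if b = a then f (some (Sum.inr b)) else 0) := by
    intro b
    by_cases h : b = a
    · simp [kite, h]
    · simp [kite, h, if_neg (Ne.symm h), Ne.symm h]
  simp only [h1, Finset.sum_sub_distrib, Finset.sum_ite_eq' Finset.univ a]
  simp [kite, Sr]
  ring

lemma deg_none : (((kite m n).degree none : ℕ) : ℝ) = m + n := by
  have := sum_nbr_none (m := m) (n := n) (fun _ => (1:ℝ))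
  rw [SimpleGraph.degree, Finset.card_eq_sum_ones]
  push_cast
  simpa [Sl, Sr] using this

lemma deg_inl (a : Fin m) : (((kite m n).degree (some (Sum.inl a)) : ℕ) : ℝ) = m := by
  have := sum_nbr_inl (m := m) (n := n) a (fun _ => (1:ℝ))
  rw [SimpleGraph.degree, Finset.card_eq_sum_ones]
  push_cast
  simpa [Sl] using this

lemma deg_inr (a : Fin n) : (((kite m n).degree (some (Sum.inr a)) : ℕ) : ℝ) = n := by
  have := sum_nbr_inr (m := m) (n := n) a (fun _ => (1:ℝ))
  rw [SimpleGraph.degree, Finset.card_eq_sum_ones]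
  push_cast
  simpa [Sr] using this

lemma mem_iff (μ : ℝ) (f : Option (Fin m ⊕ Fin n) → ℝ) :
    f ∈ (kite m n).lapEigenspace μ ↔
      (Sl f + Sr f = (1 - μ) * ((m : ℝ) + n) * f none ∧
       (∀ a : Fin m, f none + Sl f - f (some (Sum.inl a))
          = (1 - μ) * (m : ℝ) * f (some (Sum.inl a))) ∧
       (∀ a : Fin n, f none + Sr f - f (some (Sum.inr a))
          = (1 - μ) * (n : ℝ) * f (some (Sum.inr a)))) := by
  have hmem : f ∈ (kite m n).lapEigenspace μ ↔
      ∀ i, ∑ j ∈ (kite m n).neighborFinset i, f j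
        = (1 - μ) * ((kite m n).degree i : ℝ) * f i := Iff.rfl
  rw [hmem]
  constructor
  · intro h
    refine ⟨?_, fun a => ?_, fun a => ?_⟩
    · have := h none; rwa [sum_nbr_none, deg_none] at this
    · have := h (some (Sum.inl a)); rwa [sum_nbr_inl, deg_inl] at this
    · have := h (some (Sum.inr a)); rwa [sum_nbr_inr, deg_inr] at this
  · rintro ⟨h0, h1, h2⟩ i
    match i with
    | none => rw [sum_nbr_none, deg_none]; exact h0
    | some (Sum.inl a) => rw [sum_nbr_inl, deg_inl]; exact h1 a
    | some (Sum.inr a) => rw [sum_nbr_inr, deg_inr]; exact h2 a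

/-- extension by zero on the left clique -/
noncomputable def extL : (Fin m → ℝ) →ₗ[ℝ] (Option (Fin m ⊕ Fin n) → ℝ) where
  toFun g := fun v => v.elim 0 (Sum.elim g (fun _ => 0))
  map_add' g h := by funext v; rcases v with _ | (a | a) <;> simp
  map_smul' c g := by funext v; rcases v with _ | (a | a) <;> simp

noncomputable def extR : (Fin n → ℝ) →ₗ[ℝ] (Option (Fin m ⊕ Fin n) → ℝ) where
  toFun g := fun v => v.elim 0 (Sum.elim (fun _ => 0) g)
  map_add' g h := by funext v; rcases v with _ | (a | a) <;> simp
  map_smul' c g := by funext v; rcases v with _ | (a | a) <;> simp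

noncomputable def sumF (k : ℕ) : (Fin k → ℝ) →ₗ[ℝ] ℝ where
  toFun g := ∑ i, g i
  map_add' g h := by simp [Finset.sum_add_distrib]
  map_smul' c g := by simp [Finset.mul_sum]

lemma finrank_ker_sumF (k : ℕ) (hk : 1 ≤ k) :
    finrank ℝ (LinearMap.ker (sumF k)) = k - 1 := by
  have hsurj : Function.Surjective (sumF k) := by
    intro r
    refine ⟨fun i => if i = ⟨0, hk⟩ then r else 0, ?_⟩
    simp [sumF, Finset.sum_ite_eq']
  have h1 := LinearMap.finrank_range_add_finrank_ker (sumF k)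
  rw [LinearMap.range_eq_top.mpr hsurj, finrank_top, Module.finrank_self,
    Module.finrank_fintype_fun_eq_card, Fintype.card_fin] at h1
  omega

lemma extL_mem (hm : 1 ≤ m) (g : Fin m → ℝ) (hg : g ∈ LinearMap.ker (sumF m)) :
    extL g ∈ (kite m n).lapEigenspace (((m : ℝ) + 1) / (m : ℝ)) := by
  have hm0 : (m : ℝ) ≠ 0 := by positivity
  have hSl : Sl (extL (n := n) g) = 0 := by
    simpa [Sl, extL, sumF] using hg
  have hSr : Sr (extL (n := n) g) = 0 := by simp [Sr, extL]
  have hFnone : extL (n := n) g none = 0 := rfl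
  have hFinl : ∀ a, extL (n := n) g (some (Sum.inl a)) = g a := fun _ => rfl
  have hFinr : ∀ a : Fin n, extL (n := n) g (some (Sum.inr a)) = 0 := fun _ => rfl
  rw [mem_iff]
  refine ⟨?_, fun a => ?_, fun a => ?_⟩
  · rw [hSl, hSr, hFnone]; ring
  · rw [hSl, hFnone, hFinl]; field_simp; ring
  · rw [hSr, hFnone, hFinr]; ring

lemma extR_mem (hn : 1 ≤ n) (g : Fin n → ℝ) (hg : g ∈ LinearMap.ker (sumF n)) :
    extR g ∈ (kite m n).lapEigenspace (((n : ℝ) + 1) / (n : ℝ)) := by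
  have hn0 : (n : ℝ) ≠ 0 := by positivity
  have hSr : Sr (extR (m := m) g) = 0 := by
    simpa [Sr, extR, sumF] using hg
  have hSl : Sl (extR (m := m) g) = 0 := by simp [Sl, extR]
  have hFnone : extR (m := m) g none = 0 := rfl
  have hFinr : ∀ a, extR (m := m) g (some (Sum.inr a)) = g a := fun _ => rfl
  have hFinl : ∀ a : Fin m, extR (m := m) g (some (Sum.inl a)) = 0 := fun _ => rfl
  rw [mem_iff]
  refine ⟨?_, fun a => ?_, fun a => ?_⟩
  · rw [hSl, hSr, hFnone]; ring
  · rw [hSl, hFnone, hFinl]; ring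
  · rw [hSr, hFnone, hFinr]; field_simp; ring

lemma lower_l (hm : 1 ≤ m) :
    m - 1 ≤ finrank ℝ ((kite m n).lapEigenspace (((m : ℝ) + 1) / (m : ℝ))) := by
  classical
  set W := LinearMap.ker (sumF m)
  let E : W →ₗ[ℝ] ((kite m n).lapEigenspace (((m : ℝ) + 1) / (m : ℝ))) :=
    LinearMap.codRestrict _ (extL.comp W.subtype)
      (fun g => extL_mem hm g.1 g.2)
  have hinj : Function.Injective E := by
    intro g h hgh
    ext a
    have := congrFun (congrArg Subtype.val hgh) (some (Sum.inl a))
    simpa [E, extL, LinearMap.codRestrict] using this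
  calc m - 1 = finrank ℝ W := (finrank_ker_sumF m hm).symm
    _ ≤ _ := LinearMap.finrank_le_finrank_of_injective hinj

lemma lower_r (hn : 1 ≤ n) :
    n - 1 ≤ finrank ℝ ((kite m n).lapEigenspace (((n : ℝ) + 1) / (n : ℝ))) := by
  classical
  set W := LinearMap.ker (sumF n)
  let E : W →ₗ[ℝ] ((kite m n).lapEigenspace (((n : ℝ) + 1) / (n : ℝ))) :=
    LinearMap.codRestrict _ (extR.comp W.subtype)
      (fun g => extR_mem hn g.1 g.2)
  have hinj : Function.Injective E := by
    intro g h hgh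
    ext a
    have := congrFun (congrArg Subtype.val hgh) (some (Sum.inr a))
    simpa [E, extR, LinearMap.codRestrict] using this
  calc n - 1 = finrank ℝ W := (finrank_ker_sumF n hn).symm
    _ ≤ _ := LinearMap.finrank_le_finrank_of_injective hinj

end KiteAux

namespace KiteAux

open Module

lemma eig0_eq {m : ℕ} (hm : 0 < m) :
    (kite m m).lapEigenspace 0
      = Submodule.span ℝ {(fun _ => 1 : Option (Fin m ⊕ Fin m) → ℝ)} := by
  have hm0 : (m : ℝ) ≠ 0 := by positivity
  have hmp : ((m : ℝ) + 1) ≠ 0 := by positivity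
  ext f
  rw [mem_iff, Submodule.mem_span_singleton]
  constructor
  · rintro ⟨h0, h1, h2⟩
    set a0 : Fin m := ⟨0, hm⟩
    have key1 : ∀ a, ((m : ℝ) + 1) * f (some (Sum.inl a)) = f none + Sl f := by
      intro a; linear_combination -(h1 a)
    have key2 : ∀ a, ((m : ℝ) + 1) * f (some (Sum.inr a)) = f none + Sr f := by
      intro a; linear_combination -(h2 a)
    have hcl : ∀ a, f (some (Sum.inl a)) = f (some (Sum.inl a0)) :=
      fun a => mul_left_cancel₀ hmp (by rw [key1 a, key1 a0])
    have hcr : ∀ a, f (some (Sum.inr a)) = f (some (Sum.inr a0)) :=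
      fun a => mul_left_cancel₀ hmp (by rw [key2 a, key2 a0])
    have hSl : Sl f = m * f (some (Sum.inl a0)) := by
      rw [Sl, Finset.sum_congr rfl (fun a _ => hcl a)]
      simp [Finset.card_univ, mul_comm]
    have hSr : Sr f = m * f (some (Sum.inr a0)) := by
      rw [Sr, Finset.sum_congr rfl (fun a _ => hcr a)]
      simp [Finset.card_univ, mul_comm]
    have hfl : f (some (Sum.inl a0)) = f none := by
      have := key1 a0; rw [hSl] at this; linear_combination this
    have hfr : f (some (Sum.inr a0)) = f none := by
      have := key2 a0; rw [hSr] at this; linear_combination this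
    refine ⟨f none, ?_⟩
    funext v
    rcases v with _ | (a | a)
    · simp
    · show f none * 1 = _
      rw [mul_one, hcl a]; exact hfl.symm
    · show f none * 1 = _
      rw [mul_one, hcr a]; exact hfr.symm
  · rintro ⟨c, rfl⟩
    refine ⟨?_, fun a => ?_, fun a => ?_⟩ <;>
      · simp [Sl, Sr, Finset.sum_const, Finset.card_univ]
        try ring

noncomputable def g3 (m : ℕ) : Option (Fin m ⊕ Fin m) → ℝ :=
  fun v => v.elim 0 (Sum.elim (fun _ => 1) (fun _ => -1))

lemma eig2_eq {m : ℕ} (hm : 0 < m) :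
    (kite m m).lapEigenspace (1 / (m : ℝ)) = Submodule.span ℝ {g3 m} := by
  have hm0 : (m : ℝ) ≠ 0 := by positivity
  have hfact : (1 - 1 / (m : ℝ)) * (m : ℝ) = (m : ℝ) - 1 := by field_simp
  ext f
  rw [mem_iff, Submodule.mem_span_singleton]
  constructor
  · rintro ⟨h0, h1, h2⟩
    set a0 : Fin m := ⟨0, hm⟩
    have key1 : ∀ a, (m : ℝ) * f (some (Sum.inl a)) = f none + Sl f := by
      intro a; have := h1 a; rw [hfact] at this; linear_combination -this
    have key2 : ∀ a, (m : ℝ) * f (some (Sum.inr a)) = f none + Sr f := by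
      intro a; have := h2 a; rw [hfact] at this; linear_combination -this
    have hcl : ∀ a, f (some (Sum.inl a)) = f (some (Sum.inl a0)) :=
      fun a => mul_left_cancel₀ hm0 (by rw [key1 a, key1 a0])
    have hcr : ∀ a, f (some (Sum.inr a)) = f (some (Sum.inr a0)) :=
      fun a => mul_left_cancel₀ hm0 (by rw [key2 a, key2 a0])
    have hSl : Sl f = m * f (some (Sum.inl a0)) := by
      rw [Sl, Finset.sum_congr rfl (fun a _ => hcl a)]
      simp [Finset.card_univ, mul_comm]
    have hSr : Sr f = m * f (some (Sum.inr a0)) := by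
      rw [Sr, Finset.sum_congr rfl (fun a _ => hcr a)]
      simp [Finset.card_univ, mul_comm]
    have hnone : f none = 0 := by
      have := key1 a0; rw [hSl] at this; linarith
    have hBA : f (some (Sum.inr a0)) = -f (some (Sum.inl a0)) := by
      apply mul_left_cancel₀ hm0
      have := key2 a0
      rw [hSr, hnone] at this
      -- h0 : Sl f + Sr f = (1 - 1/m) * (m+m) * f none
      rw [hSl, hSr, hnone] at h0
      have h0' : (m:ℝ) * f (some (Sum.inl a0)) + m * f (some (Sum.inr a0)) = 0 := by
        rw [h0]; ring
      linarith
    refine ⟨f (some (Sum.inl a0)), ?_⟩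
    funext v
    rcases v with _ | (a | a)
    · show f (some (Sum.inl a0)) * (0:ℝ) = f none
      rw [hnone]; ring
    · show f (some (Sum.inl a0)) * (1:ℝ) = _
      rw [mul_one, hcl a]
    · show f (some (Sum.inl a0)) * (-1:ℝ) = _
      rw [hcr a, hBA]; ring
  · rintro ⟨c, rfl⟩
    have hv0 : (c • g3 m) none = 0 := by simp [g3]
    have hvl : ∀ a : Fin m, (c • g3 m) (some (Sum.inl a)) = c := by intro a; simp [g3]
    have hvr : ∀ a : Fin m, (c • g3 m) (some (Sum.inr a)) = -c := by intro a; simp [g3]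
    have hSl : Sl (c • g3 m) = m * c := by
      rw [Sl, Finset.sum_congr rfl (fun a _ => hvl a)]
      simp [Finset.card_univ, mul_comm]
    have hSr : Sr (c • g3 m) = -(m * c) := by
      rw [Sr, Finset.sum_congr rfl (fun a _ => hvr a)]
      simp [Finset.card_univ, mul_comm]
    refine ⟨?_, fun a => ?_, fun a => ?_⟩
    · rw [hSl, hSr, hv0]; ring
    · rw [hSl, hv0, hvl a, hfact]; ring
    · rw [hSr, hv0, hvr a, hfact]; ring

noncomputable def Phi (m : ℕ) : (Option (Fin m ⊕ Fin m) → ℝ) →ₗ[ℝ] ℝ × ℝ where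
  toFun f := (f none + Sl f, f none + Sr f)
  map_add' f g := by
    simp only [Pi.add_apply, Prod.mk_add_mk, Prod.mk.injEq, Sl, Sr,
      Finset.sum_add_distrib]
    constructor <;> ring
  map_smul' c f := by
    simp only [Pi.smul_apply, smul_eq_mul, RingHom.id_apply, Prod.smul_mk, Sl, Sr,
      ← Finset.mul_sum, Prod.mk.injEq]
    constructor <;> ring

lemma eig1_eq {m : ℕ} (hm : 0 < m) :
    (kite m m).lapEigenspace (((m : ℝ) + 1) / (m : ℝ)) = LinearMap.ker (Phi m) := by
  have hm0 : (m : ℝ) ≠ 0 := by positivity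
  have hfact : (1 - ((m : ℝ) + 1) / m) * (m : ℝ) = -1 := by field_simp; ring
  have hfact2 : (1 - ((m : ℝ) + 1) / m) * ((m : ℝ) + m) = -2 := by
    field_simp; ring
  ext f
  rw [mem_iff, LinearMap.mem_ker]
  have hPhi : Phi m f = (f none + Sl f, f none + Sr f) := rfl
  rw [hPhi, Prod.mk_eq_zero]
  constructor
  · rintro ⟨h0, h1, h2⟩
    have e1 := h1 ⟨0, hm⟩; rw [hfact] at e1
    have e2 := h2 ⟨0, hm⟩; rw [hfact] at e2
    exact ⟨by linarith, by linarith⟩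
  · rintro ⟨e1, e2⟩
    refine ⟨?_, fun a => ?_, fun a => ?_⟩
    · rw [hfact2]; linarith
    · rw [hfact]; linarith
    · rw [hfact]; linarith

lemma rank1 {m : ℕ} (hm : 0 < m) :
    finrank ℝ ((kite m m).lapEigenspace (((m : ℝ) + 1) / (m : ℝ))) = 2 * m - 1 := by
  rw [eig1_eq hm]
  have hsurj : Function.Surjective (Phi m) := by
    rintro ⟨x, y⟩
    refine ⟨fun v => v.elim 0
      (Sum.elim (fun a => if a = ⟨0, hm⟩ then x else 0)
        (fun a => if a = ⟨0, hm⟩ then y else 0)), ?_⟩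
    have : ∀ z : ℝ, ∑ a : Fin m, (if a = (⟨0, hm⟩ : Fin m) then z else 0) = z := by
      intro z; rw [Finset.sum_ite_eq' Finset.univ]; simp
    show (_ + _, _ + _) = (x, y)
    simp only [Option.elim, Sum.elim_inl, Sum.elim_inr, Sl, Sr]
    rw [Prod.mk.injEq]
    constructor <;> simp [this]
  have h1 := LinearMap.finrank_range_add_finrank_ker (Phi m)
  rw [LinearMap.range_eq_top.mpr hsurj, finrank_top,
    Module.finrank_fintype_fun_eq_card] at h1
  have hcard : Fintype.card (Option (Fin m ⊕ Fin m)) = 2 * m + 1 := by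
    simp [Fintype.card_option, Fintype.card_sum]; ring
  have hprod : finrank ℝ (ℝ × ℝ) = 2 := by
    simp [Module.finrank_prod]
  rw [hcard, hprod] at h1
  omega

lemma classify {m : ℕ} (hm : 2 ≤ m) (mu : ℝ) (h : (kite m m).IsLapEigenvalue mu) :
    mu = 0 ∨ mu = ((m : ℝ) + 1) / (m : ℝ) ∨ mu = 1 / (m : ℝ) := by
  obtain ⟨f, hf0, hf⟩ := h
  obtain ⟨h0, h1, h2⟩ := (mem_iff mu f).mp hf
  have hm0 : (m : ℝ) ≠ 0 := by positivity
  set t := 1 - mu with ht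
  set a0 : Fin m := ⟨0, by omega⟩ with ha0
  by_cases hc1 : t * m + 1 = 0
  · right; left
    rw [ht] at hc1
    field_simp
    linear_combination -hc1
  · have key1 : ∀ a, (t * m + 1) * f (some (Sum.inl a)) = f none + Sl f := by
      intro a; linear_combination -(h1 a)
    have key2 : ∀ a, (t * m + 1) * f (some (Sum.inr a)) = f none + Sr f := by
      intro a; linear_combination -(h2 a)
    have hcl : ∀ a, f (some (Sum.inl a)) = f (some (Sum.inl a0)) :=
      fun a => mul_left_cancel₀ hc1 (by rw [key1 a, key1 a0])
    have hcr : ∀ a, f (some (Sum.inr a)) = f (some (Sum.inr a0)) :=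
      fun a => mul_left_cancel₀ hc1 (by rw [key2 a, key2 a0])
    have hSl : Sl f = m * f (some (Sum.inl a0)) := by
      rw [Sl, Finset.sum_congr rfl (fun a _ => hcl a)]
      simp [Finset.card_univ, mul_comm]
    have hSr : Sr f = m * f (some (Sum.inr a0)) := by
      rw [Sr, Finset.sum_congr rfl (fun a _ => hcr a)]
      simp [Finset.card_univ, mul_comm]
    set A := f (some (Sum.inl a0)) with hA'
    set B := f (some (Sum.inr a0)) with hB'
    have eA : (t * m + 1 - m) * A = f none := by
      have := key1 a0; rw [hSl] at this; linear_combination this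
    have eB : (t * m + 1 - m) * B = f none := by
      have := key2 a0; rw [hSr] at this; linear_combination this
    have eAB : (m : ℝ) * A + m * B = t * ((m : ℝ) + m) * f none := by
      rw [hSl, hSr] at h0; exact h0
    by_cases hc2 : t * m + 1 - (m : ℝ) = 0
    · right; right
      rw [ht] at hc2
      field_simp
      linear_combination -hc2
    · by_cases hc3 : f none = 0
      · exfalso; apply hf0
        have hA0 : A = 0 := by
          apply mul_left_cancel₀ hc2
          rw [eA, hc3, mul_zero]
        have hB0 : B = 0 := by
          apply mul_left_cancel₀ hc2
          rw [eB, hc3, mul_zero]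
        funext v
        rcases v with _ | (a | a)
        · exact hc3
        · show f _ = 0
          rw [hcl a]; exact hA0
        · show f _ = 0
          rw [hcr a]; exact hB0
      · left
        have hAB : A = B := mul_left_cancel₀ hc2 (by rw [eA, eB])
        have h2m : (2 * (m : ℝ)) ≠ 0 := by positivity
        have hAt : A = t * f none := by
          apply mul_left_cancel₀ h2m
          linear_combination eAB + (m : ℝ) * hAB
        have hst : (t * (m : ℝ) + 1 - m) * t = 1 := by
          apply mul_right_cancel₀ hc3
          rw [one_mul]
          linear_combination eA - (t * (m : ℝ) + 1 - m) * hAt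
        have hfac : (t * (m : ℝ) + 1) * (t - 1) = 0 := by linear_combination hst
        rcases mul_eq_zero.mp hfac with hz | hz
        · exact absurd hz hc1
        · rw [ht] at hz; linarith

end KiteAux
/-- For `m, n ≥ 2`, the normalized Laplacian of the kite `K(m,n)` has
the eigenvalue `(m+1)/m` with multiplicity at least `m - 1` and the eigenvalue `(n+1)/n`
with multiplicity at least `n - 1`.  Moreover, for `m = n`, its spectrum consists exactly
of the eigenvalue `0` with multiplicity `1`, the eigenvalue `(m+1)/m` with multiplicity
`2m - 1`, and the eigenvalue `1/m` with multiplicity `1`. -/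
theorem kite_lapEigenvalues (m n : ℕ) (hm : 2 ≤ m) (hn : 2 ≤ n) :
    m - 1 ≤ Module.finrank ℝ ((kite m n).lapEigenspace (((m : ℝ) + 1) / (m : ℝ)))
      ∧ n - 1 ≤ Module.finrank ℝ ((kite m n).lapEigenspace (((n : ℝ) + 1) / (n : ℝ)))
      ∧ (m = n →
          Module.finrank ℝ ((kite m m).lapEigenspace 0) = 1
          ∧ Module.finrank ℝ ((kite m m).lapEigenspace (((m : ℝ) + 1) / (m : ℝ)))
              = 2 * m - 1
          ∧ Module.finrank ℝ ((kite m m).lapEigenspace (1 / (m : ℝ))) = 1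
          ∧ ∀ mu : ℝ, (kite m m).IsLapEigenvalue mu →
              mu = 0 ∨ mu = ((m : ℝ) + 1) / (m : ℝ) ∨ mu = 1 / (m : ℝ)) := by
  have hm1 : 0 < m := by omega
  refine ⟨KiteAux.lower_l (by omega), KiteAux.lower_r (by omega), fun _ => ⟨?_, ?_, ?_, ?_⟩⟩
  · rw [KiteAux.eig0_eq hm1]
    apply finrank_span_singleton
    intro h
    simpa using congrFun h none
  · exact KiteAux.rank1 hm1
  · rw [KiteAux.eig2_eq hm1]
    apply finrank_span_singleton
    intro h
    have := congrFun h (some (Sum.inl ⟨0, hm1⟩))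
    simp [KiteAux.g3] at this
  · exact KiteAux.classify hm
end
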